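/- arXiv:1209.0540 — 5 statements merged into one kernel-verified Lean document; each statement's English description precedes it below -/
import Mathlib

section
/- Let A → B → C → ΣA and A' → B' → C' → ΣA' be two exact triangles in a triangulated category C that are homotopy equivalent, i.e., they induce presentations of the same functor F : C^op → Ab (meaning there exist exact sequences Hom(−,B) → Hom(−,C) → F → 0 and Hom(−,B') → Hom(−,C') → F → 0). Then A ⊕ B' ⊕ C ≅ A' ⊕ B ⊕ C'. -/
open CategoryTheory CategoryTheory.Limits CategoryTheory.Pretriangulated Opposite

universe v u

/-!
Write `f, g` and `f', g'` for the first two maps of the triangles. By Yoneda, an isomorphism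
between the cokernels of `Hom(-, g)` and `Hom(-, g')` lifts to `u : C → C'` and `v : C' → C`
with `g u` factoring through `g'`, `g' v` through `g`, and `u v ≡ 1`, `v u ≡ 1` modulo maps
factoring through `g`, resp. `g'`. Completing to morphisms of triangles `φ : T → T'` and
`ψ : T' → T`, the exactness of `Hom(-, T)` and `Hom(T, -)` shows that `φ ψ` and `ψ φ` are
homotopic to the identity, up to a square-zero error in the middle term. From the
homotopies one writes down a `3 × 3` matrix `A ⊕ B' ⊕ C → A' ⊕ B ⊕ C'` and a matrix in the
opposite direction whose composites, in either order, are unitriangular, hence invertible.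
-/

section Matrix

variable {C : Type u} [Category.{v} C] [Preadditive C] [HasBinaryBiproducts C]

noncomputable def map3 {X₁ X₂ X₃ Y₁ Y₂ Y₃ : C}
    (m₁₁ : X₁ ⟶ Y₁) (m₁₂ : X₁ ⟶ Y₂) (m₁₃ : X₁ ⟶ Y₃)
    (m₂₁ : X₂ ⟶ Y₁) (m₂₂ : X₂ ⟶ Y₂) (m₂₃ : X₂ ⟶ Y₃)
    (m₃₁ : X₃ ⟶ Y₁) (m₃₂ : X₃ ⟶ Y₂) (m₃₃ : X₃ ⟶ Y₃) :
    X₁ ⊞ X₂ ⊞ X₃ ⟶ Y₁ ⊞ Y₂ ⊞ Y₃ :=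
  biprod.desc (biprod.lift m₁₁ (biprod.lift m₁₂ m₁₃))
    (biprod.desc (biprod.lift m₂₁ (biprod.lift m₂₂ m₂₃))
      (biprod.lift m₃₁ (biprod.lift m₃₂ m₃₃)))

lemma map3_comp {X₁ X₂ X₃ Y₁ Y₂ Y₃ Z₁ Z₂ Z₃ : C}
    (m₁₁ : X₁ ⟶ Y₁) (m₁₂ : X₁ ⟶ Y₂) (m₁₃ : X₁ ⟶ Y₃)
    (m₂₁ : X₂ ⟶ Y₁) (m₂₂ : X₂ ⟶ Y₂) (m₂₃ : X₂ ⟶ Y₃)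
    (m₃₁ : X₃ ⟶ Y₁) (m₃₂ : X₃ ⟶ Y₂) (m₃₃ : X₃ ⟶ Y₃)
    (n₁₁ : Y₁ ⟶ Z₁) (n₁₂ : Y₁ ⟶ Z₂) (n₁₃ : Y₁ ⟶ Z₃)
    (n₂₁ : Y₂ ⟶ Z₁) (n₂₂ : Y₂ ⟶ Z₂) (n₂₃ : Y₂ ⟶ Z₃)
    (n₃₁ : Y₃ ⟶ Z₁) (n₃₂ : Y₃ ⟶ Z₂) (n₃₃ : Y₃ ⟶ Z₃) :
    map3 m₁₁ m₁₂ m₁₃ m₂₁ m₂₂ m₂₃ m₃₁ m₃₂ m₃₃ ≫ map3 n₁₁ n₁₂ n₁₃ n₂₁ n₂₂ n₂₃ n₃₁ n₃₂ n₃₃ =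
    map3 (m₁₁ ≫ n₁₁ + m₁₂ ≫ n₂₁ + m₁₃ ≫ n₃₁) (m₁₁ ≫ n₁₂ + m₁₂ ≫ n₂₂ + m₁₃ ≫ n₃₂)
      (m₁₁ ≫ n₁₃ + m₁₂ ≫ n₂₃ + m₁₃ ≫ n₃₃)
      (m₂₁ ≫ n₁₁ + m₂₂ ≫ n₂₁ + m₂₃ ≫ n₃₁) (m₂₁ ≫ n₁₂ + m₂₂ ≫ n₂₂ + m₂₃ ≫ n₃₂)
      (m₂₁ ≫ n₁₃ + m₂₂ ≫ n₂₃ + m₂₃ ≫ n₃₃)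
      (m₃₁ ≫ n₁₁ + m₃₂ ≫ n₂₁ + m₃₃ ≫ n₃₁) (m₃₁ ≫ n₁₂ + m₃₂ ≫ n₂₂ + m₃₃ ≫ n₃₂)
      (m₃₁ ≫ n₁₃ + m₃₂ ≫ n₂₃ + m₃₃ ≫ n₃₃) := by
  apply biprod.hom_ext' <;> [skip; apply biprod.hom_ext'] <;>
  · apply biprod.hom_ext <;> [skip; apply biprod.hom_ext] <;>
      simp [map3, add_assoc]

lemma map3_id {X₁ X₂ X₃ : C} :
    map3 (𝟙 X₁) 0 0 0 (𝟙 X₂) 0 0 0 (𝟙 X₃) = 𝟙 (X₁ ⊞ X₂ ⊞ X₃) := by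
  apply biprod.hom_ext' <;> [skip; apply biprod.hom_ext'] <;>
  · apply biprod.hom_ext <;> [skip; apply biprod.hom_ext] <;> simp [map3]

lemma isIso_map3_unitriangular {X₁ X₂ X₃ : C} {δ : X₂ ⟶ X₂} (hδ : δ ≫ δ = 0)
    (l₂₁ : X₂ ⟶ X₁) (l₃₁ : X₃ ⟶ X₁) (l₃₂ : X₃ ⟶ X₂) :
    IsIso (map3 (𝟙 X₁) 0 0 l₂₁ (𝟙 X₂ + δ) 0 l₃₁ l₃₂ (𝟙 X₃)) := by
  refine ⟨map3 (𝟙 X₁) 0 0 (-l₂₁ + δ ≫ l₂₁) (𝟙 X₂ - δ) 0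
      (-l₃₁ + l₃₂ ≫ l₂₁ - l₃₂ ≫ δ ≫ l₂₁) (-l₃₂ + l₃₂ ≫ δ) (𝟙 X₃), ?_, ?_⟩ <;>
  · rw [map3_comp, ← map3_id]
    congr 1 <;>
      simp only [Preadditive.comp_add, Preadditive.add_comp, Preadditive.comp_sub,
        Preadditive.sub_comp, Preadditive.comp_neg, Preadditive.neg_comp, Category.comp_id,
        Category.id_comp, Category.assoc, comp_zero, zero_comp, hδ, reassoc_of% hδ] <;>
      abel

end Matrix

lemma isIso_of_isIso_comp_of_isIso_comp {C : Type u} [Category.{v} C] {X Y : C}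
    {f : X ⟶ Y} {g : Y ⟶ X} (hfg : IsIso (f ≫ g)) (hgf : IsIso (g ≫ f)) : IsIso f :=
  have : Mono f := mono_of_mono f g
  have : IsSplitEpi f := ⟨⟨inv (g ≫ f) ≫ g, by simp⟩⟩
  isIso_of_mono_of_isSplitEpi f

section Cokernel

variable {C : Type u} [Category.{v} C] [Preadditive C] {B Y B' Y' : C}
  {g : B ⟶ Y} {g' : B' ⟶ Y'}

lemma exists_comp_eq_of_cokernel_π_app_eq_zero {X : C} {x : X ⟶ Y}
    (hx : (cokernel.π (preadditiveYoneda.map g)).app (op X) x = 0) : ∃ s : X ⟶ B, s ≫ g = x := by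
  let S := ShortComplex.mk _ _ (cokernel.condition (preadditiveYoneda.map g))
  have hS : (S.map ((evaluation Cᵒᵖ AddCommGrpCat.{v}).obj (op X))).Exact :=
    (S.exact_of_g_is_cokernel (cokernelIsCokernel _)).map _
  exact (ShortComplex.ab_exact_iff _).1 hS x hx

lemma preadditiveYoneda_map_comp_app_id {F : Cᵒᵖ ⥤ AddCommGrpCat.{v}}
    (π : preadditiveYoneda.obj Y ⟶ F) {X : C} (y : X ⟶ Y) : (preadditiveYoneda.map y ≫ π).app (op X) (𝟙 X) = π.app (op X) y := by
  change π.app (op X) (𝟙 X ≫ y) = _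
  rw [Category.id_comp]

lemma exists_eq_add_comp_of_map_comp_cokernel_π_eq {X : C} {x x' : X ⟶ Y}
    (h : preadditiveYoneda.map x ≫ cokernel.π (preadditiveYoneda.map g) =
      preadditiveYoneda.map x' ≫ cokernel.π (preadditiveYoneda.map g)) :
    ∃ s : X ⟶ B, x = x' + s ≫ g := by
  let π := (cokernel.π (preadditiveYoneda.map g)).app (op X)
  have hsub : π (x - x') = π x - π x' := π.hom.map_sub x x'
  obtain ⟨s, hs⟩ := exists_comp_eq_of_cokernel_π_app_eq_zero (g := g) (x := x - x') (by
    rw [hsub, ← preadditiveYoneda_map_comp_app_id _ x, ← preadditiveYoneda_map_comp_app_id _ x', h,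
      sub_self])
  exact ⟨s, by rw [hs, add_sub_cancel]⟩

lemma exists_preadditiveYoneda_map_comp_eq {F : Cᵒᵖ ⥤ AddCommGrpCat.{v}}
    (π : preadditiveYoneda.obj Y' ⟶ F) [Epi (π.app (op Y))] (τ : preadditiveYoneda.obj Y ⟶ F) :
    ∃ u : Y ⟶ Y', preadditiveYoneda.map u ≫ π = τ := by
  obtain ⟨u, hu⟩ := (AddCommGrpCat.epi_iff_surjective _).1 ‹_› (τ.app (op Y) (𝟙 Y))
  refine ⟨u, ?_⟩
  ext ⟨X⟩ x
  calc (preadditiveYoneda.map u ≫ π).app (op X) x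
      = π.app (op X) ((preadditiveYoneda.obj Y').map x.op u) := rfl
    _ = F.map x.op (τ.app (op Y) (𝟙 Y)) := by rw [NatTrans.naturality_apply, hu]
    _ = τ.app (op X) ((preadditiveYoneda.obj Y).map x.op (𝟙 Y)) :=
      (NatTrans.naturality_apply _ _ _).symm
    _ = τ.app (op X) x := congrArg (τ.app (op X)) (Category.comp_id (x : X ⟶ Y))

lemma exists_comp_eq_comp_of_map_comp_cokernel_π_eq
    {φ : cokernel (preadditiveYoneda.map g) ⟶ cokernel (preadditiveYoneda.map g')} {u : Y ⟶ Y'}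
    (hu : preadditiveYoneda.map u ≫ cokernel.π (preadditiveYoneda.map g') =
      cokernel.π (preadditiveYoneda.map g) ≫ φ) :
    ∃ b : B ⟶ B', g ≫ u = b ≫ g' := by
  obtain ⟨b, hb⟩ := exists_eq_add_comp_of_map_comp_cokernel_π_eq (g := g') (x := g ≫ u) (x' := 0)
    (by rw [Functor.map_comp, Category.assoc, hu, cokernel.condition_assoc, Functor.map_zero,
      zero_comp, zero_comp])
  exact ⟨b, by rw [hb, zero_add]⟩

lemma exists_comp_eq_id_add_of_map_comp_cokernel_π_eq
    {φ : cokernel (preadditiveYoneda.map g) ⟶ cokernel (preadditiveYoneda.map g')}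
    {ψ : cokernel (preadditiveYoneda.map g') ⟶ cokernel (preadditiveYoneda.map g)}
    (hφψ : φ ≫ ψ = 𝟙 _) {u : Y ⟶ Y'} {v : Y' ⟶ Y}
    (hu : preadditiveYoneda.map u ≫ cokernel.π (preadditiveYoneda.map g') =
      cokernel.π (preadditiveYoneda.map g) ≫ φ)
    (hv : preadditiveYoneda.map v ≫ cokernel.π (preadditiveYoneda.map g) =
      cokernel.π (preadditiveYoneda.map g') ≫ ψ) :
    ∃ w : Y ⟶ B, u ≫ v = 𝟙 Y + w ≫ g :=
  exists_eq_add_comp_of_map_comp_cokernel_π_eq (by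
    rw [Functor.map_comp, Category.assoc, hv, reassoc_of% hu, hφψ, Category.comp_id,
      CategoryTheory.Functor.map_id, Category.id_comp])

end Cokernel

section Triangulated

variable {C : Type u} [Category.{v} C] [Preadditive C] [HasZeroObject C] [HasShift C ℤ]
  [∀ n : ℤ, (shiftFunctor C n).Additive] [Pretriangulated C] {T T' : Triangle C}

lemma exists_triangle_hom_of_comm₂ (hT : T ∈ distTriang C) (hT' : T' ∈ distTriang C)
    (b : T.obj₂ ⟶ T'.obj₂) (c : T.obj₃ ⟶ T'.obj₃) (comm : T.mor₂ ≫ c = b ≫ T'.mor₂) :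
    ∃ φ : T ⟶ T', φ.hom₂ = b ∧ φ.hom₃ = c := by
  obtain ⟨a, comm₁, comm₃⟩ := complete_distinguished_triangle_morphism₁ T T' hT hT' b c comm
  exact ⟨Triangle.homMk T T' a b c comm₁ comm comm₃, rfl, rfl⟩

lemma Triangle.exists_hom₁_eq_mor₁_comp (hT : T ∈ distTriang C) (θ : T ⟶ T')
    (hθ : θ.hom₃ ≫ T'.mor₃ = 0) : ∃ k : T.obj₂ ⟶ T'.obj₁, θ.hom₁ = T.mor₁ ≫ k := by
  obtain ⟨χ, hχ⟩ : ∃ χ : T.obj₂⟦(1 : ℤ)⟧ ⟶ T'.obj₁⟦(1 : ℤ)⟧,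
      θ.hom₁⟦(1 : ℤ)⟧' = (-T.mor₁⟦(1 : ℤ)⟧') ≫ χ :=
    Triangle.yoneda_exact₃ _ (rot_of_distTriang _ hT) _ (θ.comm₃.trans hθ)
  refine ⟨(shiftFunctor C (1 : ℤ)).preimage (-χ), (shiftFunctor C (1 : ℤ)).map_injective ?_⟩
  rw [hχ, Functor.map_comp, Functor.map_preimage, Preadditive.neg_comp, Preadditive.comp_neg]

lemma Triangle.exists_homotopy_of_hom₃_eq (hT : T ∈ distTriang C) (φ : T ⟶ T)
    (w : T.obj₃ ⟶ T.obj₂) (hw : φ.hom₃ = 𝟙 _ + w ≫ T.mor₂) :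
    ∃ (k : T.obj₂ ⟶ T.obj₁) (δ : T.obj₂ ⟶ T.obj₂), δ ≫ δ = 0 ∧
      φ.hom₁ = 𝟙 _ + T.mor₁ ≫ k ∧ φ.hom₂ = 𝟙 _ + k ≫ T.mor₁ + T.mor₂ ≫ w + δ := by
  have hθ₃ : (φ - 𝟙 T).hom₃ = w ≫ T.mor₂ := by simp [hw]
  obtain ⟨k, hk⟩ := Triangle.exists_hom₁_eq_mor₁_comp hT (φ - 𝟙 T)
    (by rw [hθ₃, Category.assoc, comp_distTriang_mor_zero₂₃ T hT, comp_zero])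
  obtain ⟨e, he⟩ := Triangle.coyoneda_exact₂ T hT ((φ - 𝟙 T).hom₂ - T.mor₂ ≫ w)
    (by rw [Preadditive.sub_comp, ← (φ - 𝟙 T).comm₂, hθ₃, Category.assoc, sub_self])
  -- `e` need not equal `k`; this is where the square-zero error term comes from.
  have hfef : T.mor₁ ≫ (e - k) ≫ T.mor₁ = 0 := calc
    T.mor₁ ≫ (e - k) ≫ T.mor₁ = T.mor₁ ≫ (e ≫ T.mor₁) - (T.mor₁ ≫ k) ≫ T.mor₁ := by
      simp only [Preadditive.sub_comp, Preadditive.comp_sub, Category.assoc]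
    _ = T.mor₁ ≫ (φ - 𝟙 T).hom₂ - (φ - 𝟙 T).hom₁ ≫ T.mor₁ := by
      rw [← he, ← hk, Preadditive.comp_sub, comp_distTriang_mor_zero₁₂_assoc T hT, zero_comp,
        sub_zero]
    _ = 0 := by rw [(φ - 𝟙 T).comm₁, sub_self]
  refine ⟨k, (e - k) ≫ T.mor₁, by rw [Category.assoc, hfef, comp_zero], ?_, ?_⟩
  · rw [← sub_eq_iff_eq_add', ← hk, Triangle.sub_hom₁, id_hom₁]
  · have hφ₂ : φ.hom₂ = 𝟙 _ + T.mor₂ ≫ w + e ≫ T.mor₁ := by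
      rw [← he, Triangle.sub_hom₂, id_hom₂]
      abel
    rw [hφ₂, Preadditive.sub_comp]
    abel

lemma isIso_map3_of_homotopy_inverse [HasBinaryBiproducts C] (hT : T ∈ distTriang C)
    (hT' : T' ∈ distTriang C) {φ : T ⟶ T'} {ψ : T' ⟶ T}
    {k : T.obj₂ ⟶ T.obj₁} {δ : T.obj₂ ⟶ T.obj₂} {w : T.obj₃ ⟶ T.obj₂}
    {k' : T'.obj₂ ⟶ T'.obj₁} {δ' : T'.obj₂ ⟶ T'.obj₂} {w' : T'.obj₃ ⟶ T'.obj₂}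
    (hδ : δ ≫ δ = 0) (h₁ : φ.hom₁ ≫ ψ.hom₁ = 𝟙 _ + T.mor₁ ≫ k)
    (h₂ : φ.hom₂ ≫ ψ.hom₂ = 𝟙 _ + k ≫ T.mor₁ + T.mor₂ ≫ w + δ)
    (h₃ : φ.hom₃ ≫ ψ.hom₃ = 𝟙 _ + w ≫ T.mor₂)
    (hδ' : δ' ≫ δ' = 0) (h₁' : ψ.hom₁ ≫ φ.hom₁ = 𝟙 _ + T'.mor₁ ≫ k')
    (h₂' : ψ.hom₂ ≫ φ.hom₂ = 𝟙 _ + k' ≫ T'.mor₁ + T'.mor₂ ≫ w' + δ')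
    (h₃' : ψ.hom₃ ≫ φ.hom₃ = 𝟙 _ + w' ≫ T'.mor₂) :
    IsIso (map3 φ.hom₁ (-T.mor₁) 0 (-k') ψ.hom₂ T'.mor₂ 0 w φ.hom₃) := by
  refine isIso_of_isIso_comp_of_isIso_comp (g := map3 ψ.hom₁ T'.mor₁ 0 k φ.hom₂ (-T.mor₂) 0 (-w')
    ψ.hom₃) ?_ ?_ <;> rw [map3_comp]
  · convert isIso_map3_unitriangular hδ' _ _ _ using 2 <;>
      simp only [h₁, h₂', h₃, φ.comm₁, ψ.comm₂, comp_distTriang_mor_zero₁₂ T hT,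
        Preadditive.neg_comp, Preadditive.comp_neg, comp_zero, zero_comp, neg_neg, add_zero] <;>
      abel
  · convert isIso_map3_unitriangular hδ _ _ _ using 2 <;>
      simp only [h₁', h₂, h₃', ψ.comm₁, φ.comm₂, comp_distTriang_mor_zero₁₂ T' hT',
        Preadditive.neg_comp, Preadditive.comp_neg, comp_zero, zero_comp, add_zero] <;>
      abel

end Triangulated

/-- (Schanuel's lemma for triangulated categories.)  Two exact
triangles `A → B → C → ΣA` and `A' → B' → C' → ΣA'` in a triangulated category
are homotopy equivalent if they induce presentations of the same (i.e. isomorphic)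
functor `F : Cᵒᵖ ⥤ Ab`, that is, the cokernels of `Hom(−,B) → Hom(−,C)` and of
`Hom(−,B') → Hom(−,C')` are isomorphic.  In that case
`A ⊕ B' ⊕ C ≅ A' ⊕ B ⊕ C'`. -/
theorem schanuel_for_triangulated_categories
    {C : Type u} [Category.{v} C] [HasZeroObject C] [HasShift C ℤ] [Preadditive C]
    [∀ n : ℤ, (CategoryTheory.shiftFunctor C n).Additive] [Pretriangulated C]
    [HasBinaryBiproducts C]
    (T T' : Triangle C) (hT : T ∈ distTriang C) (hT' : T' ∈ distTriang C)
    (h : Nonempty (cokernel (preadditiveYoneda.map T.mor₂) ≅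
      cokernel (preadditiveYoneda.map T'.mor₂))) :
    Nonempty (T.obj₁ ⊞ T'.obj₂ ⊞ T.obj₃ ≅ T'.obj₁ ⊞ T.obj₂ ⊞ T'.obj₃) := by
  obtain ⟨α⟩ := h
  obtain ⟨u, hu⟩ := exists_preadditiveYoneda_map_comp_eq (cokernel.π _) (cokernel.π _ ≫ α.hom)
  obtain ⟨v, hv⟩ := exists_preadditiveYoneda_map_comp_eq (cokernel.π _) (cokernel.π _ ≫ α.inv)
  obtain ⟨b, hb⟩ := exists_comp_eq_comp_of_map_comp_cokernel_π_eq hu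
  obtain ⟨b', hb'⟩ := exists_comp_eq_comp_of_map_comp_cokernel_π_eq hv
  obtain ⟨w, hw⟩ := exists_comp_eq_id_add_of_map_comp_cokernel_π_eq α.hom_inv_id hu hv
  obtain ⟨w', hw'⟩ := exists_comp_eq_id_add_of_map_comp_cokernel_π_eq α.inv_hom_id hv hu
  obtain ⟨φ, rfl, rfl⟩ := exists_triangle_hom_of_comm₂ hT hT' b u hb
  obtain ⟨ψ, rfl, rfl⟩ := exists_triangle_hom_of_comm₂ hT' hT b' v hb'
  obtain ⟨k, δ, hδ, h₁, h₂⟩ := Triangle.exists_homotopy_of_hom₃_eq hT (φ ≫ ψ) w hw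
  obtain ⟨k', δ', hδ', h₁', h₂'⟩ := Triangle.exists_homotopy_of_hom₃_eq hT' (ψ ≫ φ) w' hw'
  have := isIso_map3_of_homotopy_inverse hT hT' hδ h₁ h₂ hw hδ' h₁' h₂' hw'
  exact ⟨asIso (map3 φ.hom₁ (-T.mor₁) 0 (-k') ψ.hom₂ T'.mor₂ 0 w φ.hom₃)⟩
end

section
/- Let A be an abelian category and χ : Ob A → ℕ an additive function. Then every object of the quotient abelian category A/S_χ (where S_χ is the Serre subcategory of objects with χ(X) = 0) has finite length; in fact the length of the image of X in A/S_χ is at most χ(X). -/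
open CategoryTheory CategoryTheory.Limits

universe v u v' u'

/-- A function on the objects of an abelian category is *additive* if it is
additive on short exact sequences. -/
def IsAdditiveFn {A : Type u} [Category.{v} A] [Abelian A] (χ : A → ℕ) : Prop :=
  ∀ S : ShortComplex A, S.ShortExact → χ S.X₂ = χ S.X₁ + χ S.X₃

/-- The class of morphisms inverted in the Gabriel quotient `A ⧸ S_χ`, where
`S_χ` is the Serre subcategory of objects with `χ X = 0`: those morphisms whose
kernel and cokernel belong to `S_χ`. -/
noncomputable def serreW {A : Type u} [Category.{v} A] [Abelian A] (χ : A → ℕ) :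
    MorphismProperty A :=
  fun _ _ f => χ (kernel f) = 0 ∧ χ (cokernel f) = 0

/-!
`S_χ` is a Serre class and `χ` is invariant under the morphisms inverted by `L`, so every
morphism `L X ⟶ L Y` is a left fraction `L f ≫ (L s)⁻¹` with `χ` unchanged along `s`. When it
is a monomorphism, `kernel f ∈ S_χ`, so `χ X = χ (image f) ≤ χ Y`, with equality only if also
`cokernel f ∈ S_χ`, i.e. only if the morphism is an isomorphism. Hence along a strict chain of
subobjects of `L X`, the values of `χ` at preimages strictly increase and stay `≤ χ X`.
-/

lemma Fin.le_add_one_of_injective_of_le {m n : ℕ} {f : Fin m → ℕ} (hf : Function.Injective f)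
    (hle : ∀ i, f i ≤ n) : m ≤ n + 1 := by
  simpa using Fintype.card_le_of_injective
    (fun i => (⟨f i, Nat.lt_succ_of_le (hle i)⟩ : Fin (n + 1)))
    (fun i j h => hf (congrArg Fin.val h))

/-- Mathlib's `SerreClassLocalization.mono_map_iff` asks for an additive `L` into a preadditive
category; transporting it along `Localization.uniq` from `P.isoModSerre.Localization` removes
this assumption. -/
lemma ObjectProperty.monoModSerre_of_mono_map {A : Type u} [Category.{v} A] [Abelian A]
    {D : Type u'} [Category.{v'} D] (L : A ⥤ D) (P : ObjectProperty A) [P.IsSerreClass]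
    [L.IsLocalization P.isoModSerre] {X Y : A} (f : X ⟶ Y) [Mono (L.map f)] :
    P.monoModSerre f := by
  let e := Localization.compUniqFunctor P.isoModSerre.Q L P.isoModSerre
  have : Mono ((Localization.uniq P.isoModSerre.Q L P.isoModSerre).functor.map
      (P.isoModSerre.Q.map f)) := by
    rw [← Functor.comp_map, ← NatIso.naturality_2 e]
    infer_instance
  have := Functor.mono_of_mono_map _ this
  exact (ObjectProperty.SerreClassLocalization.mono_map_iff P.isoModSerre.Q P f).1 this

variable {A : Type u} [Category.{v} A] [Abelian A] {χ : A → ℕ}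

/-- The Serre subcategory `S_χ`. -/
def vanishing (χ : A → ℕ) : ObjectProperty A := fun X => χ X = 0

namespace IsAdditiveFn

variable (hχ : IsAdditiveFn χ)
include hχ

lemma eq_add_of_mono {X Y : A} (f : X ⟶ Y) [Mono f] : χ Y = χ X + χ (cokernel f) :=
  hχ _ (ShortComplex.ShortExact.mk' (ShortComplex.exact_cokernel f) inferInstance inferInstance)

lemma eq_add_of_epi {X Y : A} (f : X ⟶ Y) [Epi f] : χ X = χ (kernel f) + χ Y :=
  hχ _ (ShortComplex.ShortExact.mk' (ShortComplex.exact_kernel f) inferInstance inferInstance)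

lemma eq_zero_of_isZero {Z : A} (hZ : IsZero Z) : χ Z = 0 := by
  have : χ Z = χ Z + χ Z := hχ (ShortComplex.mk (𝟙 Z) (𝟙 Z) (hZ.eq_of_src _ _))
    (ShortComplex.ShortExact.mk' (ShortComplex.exact_of_isZero_X₂ _ hZ) inferInstance
      inferInstance)
  omega

lemma isSerreClass : (vanishing χ).IsSerreClass where
  exists_zero := ⟨_, isZero_zero A, hχ.eq_zero_of_isZero (isZero_zero A)⟩
  prop_of_mono f _ hY := by
    have := hχ.eq_add_of_mono f
    simp only [vanishing] at hY ⊢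
    omega
  prop_of_epi f _ hX := by
    have := hχ.eq_add_of_epi f
    simp only [vanishing] at hX ⊢
    omega
  prop_X₂_of_shortExact hS h₁ h₃ := by
    simp only [vanishing] at h₁ h₃ ⊢
    rw [hχ _ hS, h₁, h₃]

lemma eq_of_serreW {X Y : A} {f : X ⟶ Y} (hf : serreW χ f) : χ X = χ Y := by
  have := hχ.isSerreClass
  have hker : χ (kernel (Abelian.factorThruImage f)) = 0 :=
    (ObjectProperty.monoModSerre.isoModSerre_factorThruImage (P := vanishing χ) hf.1).1
  have hcoker : χ (cokernel (Abelian.image.ι f)) = 0 :=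
    (ObjectProperty.epiModSerre.isoModSerre_image_ι (P := vanishing χ) hf.2).2
  have := hχ.eq_add_of_epi (Abelian.factorThruImage f)
  have := hχ.eq_add_of_mono (Abelian.image.ι f)
  omega

lemma eq_of_iso {X Y : A} (e : X ≅ Y) : χ X = χ Y := by
  have := hχ.isSerreClass
  exact hχ.eq_of_serreW ((vanishing χ).isoModSerre_of_isIso e.hom)

section Localization

variable {D : Type u'} [Category.{v'} D] (L : A ⥤ D) [L.IsLocalization (serreW χ)]

lemma kernel_eq_zero_of_mono_map {X Y : A} (f : X ⟶ Y) [Mono (L.map f)] :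
    χ (kernel f) = 0 := by
  have := hχ.isSerreClass
  have : L.IsLocalization (vanishing χ).isoModSerre := ‹_›
  exact ObjectProperty.monoModSerre_of_mono_map L (vanishing χ) f

lemma eq_add_cokernel_of_mono_map {X Y : A} (f : X ⟶ Y) [Mono (L.map f)] :
    χ Y = χ X + χ (cokernel f) := by
  have := hχ.isSerreClass
  have hX := hχ.eq_of_serreW
    (ObjectProperty.monoModSerre.isoModSerre_factorThruImage (P := vanishing χ)
      (hχ.kernel_eq_zero_of_mono_map L f))
  have hY := hχ.eq_add_of_mono (Abelian.image.ι f)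
  have hcoker := hχ.eq_of_iso
    (asIso (cokernel.map f (Abelian.image.ι f) (Abelian.factorThruImage f) (𝟙 Y) (by simp)))
  omega

lemma le_and_isIso_of_eq_of_mono {X Y : A} (ψ : L.obj X ⟶ L.obj Y) [Mono ψ] :
    χ X ≤ χ Y ∧ (χ X = χ Y → IsIso ψ) := by
  have := hχ.isSerreClass
  have : (serreW χ).HasLeftCalculusOfFractions :=
    inferInstanceAs (vanishing χ).isoModSerre.HasLeftCalculusOfFractions
  obtain ⟨φ, rfl⟩ := Localization.exists_leftFraction L (serreW χ) ψ
  have hφ := φ.map_comp_map_s L (Localization.inverts L (serreW χ))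
  have : IsIso (L.map φ.s) := Localization.inverts L (serreW χ) φ.s φ.hs
  have : Mono (L.map φ.f) := hφ ▸ mono_comp _ _
  have hf := hχ.eq_add_cokernel_of_mono_map L φ.f
  have hs := hχ.eq_of_serreW φ.hs
  refine ⟨by omega, fun h => ?_⟩
  have : IsIso (L.map φ.f) := Localization.inverts L (serreW χ) φ.f
    ⟨hχ.kernel_eq_zero_of_mono_map L φ.f, by omega⟩
  rw [← hφ] at this
  exact IsIso.of_isIso_comp_right _ (L.map φ.s)

lemma lt_of_subobject_lt {Z : D} {S T : Subobject Z} (h : S < T) {X Y : A}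
    (eX : L.obj X ≅ S) (eY : L.obj Y ≅ T) : χ X < χ Y := by
  obtain ⟨hle, hiso⟩ :=
    hχ.le_and_isIso_of_eq_of_mono L (eX.hom ≫ Subobject.ofLE S T h.le ≫ eY.inv)
  refine lt_of_le_of_ne hle fun heq => h.not_ge ?_
  have := hiso heq
  have : IsIso (Subobject.ofLE S T h.le) := by
    have : IsIso (eX.inv ≫ (eX.hom ≫ Subobject.ofLE S T h.le ≫ eY.inv) ≫ eY.hom) :=
      inferInstance
    simpa using this
  exact Subobject.le_of_comm (inv (Subobject.ofLE S T h.le)) (by simp)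

end Localization

end IsAdditiveFn

theorem length_le_of_additive_general {A : Type u} [Category.{v} A] [Abelian A]
    {D : Type u'} [Category.{v'} D]
    (χ : A → ℕ) (hχ : IsAdditiveFn χ)
    (L : A ⥤ D) [L.IsLocalization (serreW χ)]
    (X : A) (m : ℕ) (c : Fin m → Subobject (L.obj X)) (hc : StrictMono c) :
    m ≤ χ X + 1 := by
  have := Localization.essSurj L (serreW χ)
  let e (i : Fin m) : L.obj (L.objPreimage (c i : D)) ≅ c i := L.objObjPreimageIso _
  have hlt : StrictMono fun i => χ (L.objPreimage (c i : D)) :=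
    fun i j hij => hχ.lt_of_subobject_lt L (hc hij) (e i) (e j)
  have hle (i : Fin m) : χ (L.objPreimage (c i : D)) ≤ χ X :=
    (hχ.le_and_isIso_of_eq_of_mono L ((e i).hom ≫ (c i).arrow)).1
  exact Fin.le_add_one_of_injective_of_le hlt.injective hle

/-- If `χ` is an additive function on an abelian category `A` and
`L : A ⥤ D` is the Gabriel quotient of `A` by the Serre subcategory
`S_χ = {X | χ X = 0}` (i.e. the localization of `A` at the morphisms whose kernel
and cokernel lie in `S_χ`), then the image `L.obj X` of any object `X` has finite
length at most `χ X`: every strictly increasing chain of subobjects of `L.obj X`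
has at most `χ X + 1` terms. -/
theorem length_le_of_additive {A : Type u} [Category.{v} A] [Abelian A]
    {D : Type u'} [Category.{v'} D] [Abelian D]
    (χ : A → ℕ) (hχ : IsAdditiveFn χ)
    (L : A ⥤ D) [L.IsLocalization (serreW χ)]
    (X : A) (m : ℕ) (c : Fin m → Subobject (L.obj X)) (hc : StrictMono c) :
    m ≤ χ X + 1 :=
  length_le_of_additive_general χ hχ L X m c hc
end

section
/- Every additive function χ : Ob A → ℕ on an abelian category A can be written uniquely as a locally finite sum of irreducible additive functions. (Locally finite means: for each object X, only finitely many summands are nonzero at X. Irreducible means: nonzero and not expressible as a sum of two nonzero additive functions.) -/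
/-!
The objects on which `χ` vanishes form a Serre class, and in the quotient by it every object
has finite length, bounded by its value under `χ`. For each simple object `S` of the quotient
the Jordan–Hölder multiplicity `[- : S]` is additive (Schreier refinement, using the butterfly
isomorphisms) and irreducible, and `χ` is the locally finite sum of the `χ(S) • [- : S]` over
the isomorphism classes of simples. Conversely, an irreducible summand `ψ` of any decomposition
satisfies `ψ ≤ χ`; at a simple `S` with `ψ(S) ≠ 0` it dominates `ψ(S) • [- : S]`, so by
irreducibility it equals `[- : S]`. Evaluating the decomposition at `S` then recovers the
coefficient `χ(S)`.
-/

open CategoryTheory CategoryTheory.Limits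

universe v u

/-- An additive function is *irreducible* if it is nonzero and cannot be written
as the (pointwise) sum of two nonzero additive functions. -/
def IsIrreducibleAdd {A : Type u} [Category.{v} A] [Abelian A] (χ : A → ℕ) : Prop :=
  (∃ X : A, χ X ≠ 0) ∧
    ∀ φ ψ : A → ℕ, IsAdditiveFn φ → IsAdditiveFn ψ → (∀ X : A, χ X = φ X + ψ X) →
      (∀ X : A, φ X = 0) ∨ (∀ X : A, ψ X = 0)

variable {A : Type u} [Category.{v} A] [Abelian A]

namespace IsAdditiveFn

variable {φ : A → ℕ}

theorem eq_add_cokernel_of_mono (hφ : IsAdditiveFn φ) {X Y : A} (f : X ⟶ Y) [Mono f] :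
    φ Y = φ X + φ (cokernel f) :=
  hφ _ { exact := ShortComplex.exact_cokernel f }

theorem eq_kernel_add_of_epi (hφ : IsAdditiveFn φ) {X Y : A} (f : X ⟶ Y) [Epi f] :
    φ X = φ (kernel f) + φ Y :=
  hφ _ { exact := ShortComplex.exact_kernel f }

theorem eq_zero_of_isZero_s4 (hφ : IsAdditiveFn φ) {X : A} (hX : IsZero X) : φ X = 0 := by
  have := hφ (ShortComplex.mk (0 : X ⟶ X) 0 comp_zero)
    { exact := ShortComplex.exact_of_isZero_X₂ _ hX, mono_f := hX.mono _, epi_g := hX.epi _ }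
  dsimp only at this
  omega

theorem congr_iso (hφ : IsAdditiveFn φ) {X Y : A} (e : X ≅ Y) : φ X = φ Y := by
  rw [hφ.eq_add_cokernel_of_mono e.hom, hφ.eq_zero_of_isZero_s4 (isZero_cokernel_of_epi e.hom),
    add_zero]

theorem le_of_mono (hφ : IsAdditiveFn φ) {X Y : A} (f : X ⟶ Y) [Mono f] : φ X ≤ φ Y := by
  rw [hφ.eq_add_cokernel_of_mono f]; omega

theorem le_of_epi (hφ : IsAdditiveFn φ) {X Y : A} (f : X ⟶ Y) [Epi f] : φ Y ≤ φ X := by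
  rw [hφ.eq_kernel_add_of_epi f]; omega

theorem eq_kernel_add_image (hφ : IsAdditiveFn φ) {X Y : A} (f : X ⟶ Y) :
    φ X = φ (kernel f) + φ (Abelian.image f) :=
  (hφ.eq_add_cokernel_of_mono (kernel.ι f)).trans
    (congrArg _ (hφ.congr_iso (Abelian.coimageIsoImage f)))

theorem eq_image_add_cokernel (hφ : IsAdditiveFn φ) {X Y : A} (f : X ⟶ Y) :
    φ Y = φ (Abelian.image f) + φ (cokernel f) :=
  hφ.eq_kernel_add_of_epi (cokernel.π f)

theorem const_mul (hφ : IsAdditiveFn φ) (c : ℕ) : IsAdditiveFn fun X => c * φ X :=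
  fun S hS => by simp only [hφ S hS, mul_add]

theorem tsub {ψ : A → ℕ} (hψ : IsAdditiveFn ψ) (hφ : IsAdditiveFn φ) (hle : ∀ X, φ X ≤ ψ X) :
    IsAdditiveFn fun X => ψ X - φ X := fun S hS => by
  have := hψ S hS; have := hφ S hS; have := hle S.X₁; have := hle S.X₃
  dsimp only
  omega

end IsAdditiveFn

theorem isAdditiveFn_finsum {ι : Type*} {f : ι → A → ℕ} (hf : ∀ i, IsAdditiveFn (f i))
    (hfin : ∀ X, (Function.support fun i => f i X).Finite) :
    IsAdditiveFn fun X => ∑ᶠ i, f i X := fun T hT => by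
  simp only [hf _ T hT]
  exact finsum_add_distrib (hfin _) (hfin _)

namespace IsIrreducibleAdd

variable {φ ψ : A → ℕ}

theorem eq_of_le (hψ : IsIrreducibleAdd ψ) (hψa : IsAdditiveFn ψ) (hφ : IsAdditiveFn φ)
    (hle : ∀ X, φ X ≤ ψ X) (hne : ∃ X, φ X ≠ 0) : φ = ψ := by
  obtain ⟨X₀, hX₀⟩ := hne
  rcases hψ.2 φ _ hφ (hψa.tsub hφ hle) (fun X => by have := hle X; omega) with h | h
  · exact absurd (h X₀) hX₀
  · funext X
    have := hle X; have := h X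
    omega

theorem eq_of_eq_mul (hψ : IsIrreducibleAdd ψ) (hφ : IsAdditiveFn φ) {c : ℕ}
    (h : ∀ X, ψ X = c * φ X) : ψ = φ := by
  obtain ⟨X₀, hX₀⟩ := hψ.1
  have hcφ : c * φ X₀ ≠ 0 := h X₀ ▸ hX₀
  obtain ⟨d, rfl⟩ : ∃ d, c = d + 1 :=
    Nat.exists_eq_add_one.2 (Nat.pos_of_ne_zero (left_ne_zero_of_mul hcφ))
  rcases hψ.2 φ _ hφ (hφ.const_mul d) (fun X => by rw [h X]; ring) with h' | h'
  · exact absurd (h' X₀) (right_ne_zero_of_mul hcφ)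
  · obtain rfl : d = 0 := (mul_eq_zero.1 (h' X₀)).resolve_right (right_ne_zero_of_mul hcφ)
    funext X
    rw [h X, zero_add, one_mul]

end IsIrreducibleAdd

/-- `ObjectProperty.isoModSerre` for the Serre class of `χ`-null objects. -/
def IsChiIso (χ : A → ℕ) {X Y : A} (f : X ⟶ Y) : Prop :=
  χ (kernel f) = 0 ∧ χ (cokernel f) = 0

/-- Isomorphism in the Serre quotient by the `χ`-null objects. -/
def ChiEquiv (χ : A → ℕ) : A → A → Prop :=
  Relation.EqvGen fun X Y => ∃ f : X ⟶ Y, IsChiIso χ f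

def ChiSimple (χ : A → ℕ) (X : A) : Prop :=
  χ X ≠ 0 ∧ ∀ (Y : A) (i : Y ⟶ X), Mono i → χ Y = 0 ∨ χ Y = χ X

namespace IsAdditiveFn

variable {χ ψ : A → ℕ}

theorem eq_of_isChiIso (hψ : IsAdditiveFn ψ) (hle : ∀ X, ψ X ≤ χ X) {X Y : A} {f : X ⟶ Y}
    (hf : IsChiIso χ f) : ψ X = ψ Y := by
  have := hψ.eq_kernel_add_image f
  have := hψ.eq_image_add_cokernel f
  have := hle (kernel f)
  have := hle (cokernel f)
  have := hf.1
  have := hf.2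
  omega

theorem eq_of_chiEquiv (hψ : IsAdditiveFn ψ) (hle : ∀ X, ψ X ≤ χ X) {X Y : A}
    (h : ChiEquiv χ X Y) : ψ X = ψ Y := by
  induction h with
  | rel X Y h => exact hψ.eq_of_isChiIso hle h.choose_spec
  | refl => rfl
  | symm _ _ _ ih => exact ih.symm
  | trans _ _ _ _ _ ih₁ ih₂ => exact ih₁.trans ih₂

theorem isChiIso_of_isIso (hχ : IsAdditiveFn χ) {X Y : A} (f : X ⟶ Y) [IsIso f] :
    IsChiIso χ f :=
  ⟨hχ.eq_zero_of_isZero_s4 (isZero_kernel_of_mono f),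
    hχ.eq_zero_of_isZero_s4 (isZero_cokernel_of_epi f)⟩

theorem chiEquiv_of_iso (hχ : IsAdditiveFn χ) {X Y : A} (e : X ≅ Y) : ChiEquiv χ X Y :=
  .rel _ _ ⟨e.hom, hχ.isChiIso_of_isIso _⟩

theorem isChiIso_f_of_shortExact (hχ : IsAdditiveFn χ) {S : ShortComplex A}
    (hS : S.ShortExact) (h : χ S.X₃ = 0) : IsChiIso χ S.f := by
  have := hS.mono_f
  have := hχ S hS
  have := hχ.eq_add_cokernel_of_mono S.f
  exact ⟨hχ.eq_zero_of_isZero_s4 (isZero_kernel_of_mono _), by omega⟩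

theorem isChiIso_g_of_shortExact (hχ : IsAdditiveFn χ) {S : ShortComplex A}
    (hS : S.ShortExact) (h : χ S.X₁ = 0) : IsChiIso χ S.g := by
  have := hS.epi_g
  have := hχ S hS
  have := hχ.eq_kernel_add_of_epi S.g
  exact ⟨by omega, hχ.eq_zero_of_isZero_s4 (isZero_cokernel_of_epi _)⟩

theorem chiSimple_iff_of_isChiIso (hχ : IsAdditiveFn χ) {X Y : A} {f : X ⟶ Y}
    (hf : IsChiIso χ f) : ChiSimple χ X ↔ ChiSimple χ Y := by
  have hXY : χ X = χ Y := hχ.eq_of_isChiIso (fun _ => le_rfl) hf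
  constructor
  · refine fun ⟨hX0, hX⟩ => ⟨hXY ▸ hX0, fun V i _ => ?_⟩
    -- compare `V ⊆ Y` with its preimage `kernel g ⊆ X`
    let g := f ≫ cokernel.π i
    have hcok : χ (cokernel g) = 0 := Nat.le_zero.1 <|
      hf.2 ▸ hχ.le_of_epi (cokernel.map f g (𝟙 X) (cokernel.π i) (by simp [g]))
    have := hχ.eq_add_cokernel_of_mono i
    have := hχ.eq_kernel_add_image g
    have := hχ.eq_image_add_cokernel g
    have := hX _ (kernel.ι g) inferInstance
    omega
  · refine fun ⟨hY0, hY⟩ => ⟨hXY ▸ hY0, fun W i _ => ?_⟩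
    let g := i ≫ f
    have hker : χ (kernel g) = 0 := Nat.le_zero.1 <|
      hf.1 ▸ hχ.le_of_mono (kernel.map g f i (𝟙 Y) (by simp [g]))
    have := hχ.eq_kernel_add_image g
    have := hY _ (Abelian.image.ι g) inferInstance
    omega

theorem chiSimple_iff_of_chiEquiv (hχ : IsAdditiveFn χ) {X Y : A} (h : ChiEquiv χ X Y) :
    ChiSimple χ X ↔ ChiSimple χ Y := by
  induction h with
  | rel X Y h => exact hχ.chiSimple_iff_of_isChiIso h.choose_spec
  | refl => rfl
  | symm _ _ _ ih => exact ih.symm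
  | trans _ _ _ _ _ ih₁ ih₂ => exact ih₁.trans ih₂

theorem chiEquiv_or_chiEquiv_of_shortExact (hχ : IsAdditiveFn χ) {S : ShortComplex A}
    (hS : S.ShortExact) (h : ChiSimple χ S.X₂) :
    (χ S.X₁ = 0 ∧ ChiEquiv χ S.X₂ S.X₃) ∨ (ChiEquiv χ S.X₁ S.X₂ ∧ χ S.X₃ = 0) := by
  have := hχ S hS
  rcases h.2 S.X₁ S.f hS.mono_f with h₁ | h₁
  · exact .inl ⟨h₁, .rel _ _ ⟨S.g, hχ.isChiIso_g_of_shortExact hS h₁⟩⟩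
  · have h₃ : χ S.X₃ = 0 := by omega
    exact .inr ⟨.rel _ _ ⟨S.f, hχ.isChiIso_f_of_shortExact hS h₃⟩, h₃⟩

end IsAdditiveFn

section Butterfly

variable {S T : ShortComplex A}

noncomputable def kernelButterflyHom (hT : T.ShortExact) (e : S.X₂ ≅ T.X₂) :
    kernel (S.f ≫ e.hom ≫ T.g) ⟶ kernel (T.f ≫ e.inv ≫ S.g) :=
  haveI := hT.mono_f
  kernel.lift _ (hT.exact.lift (kernel.ι _ ≫ S.f ≫ e.hom) (by simp [kernel.condition]))
    (by simp)

noncomputable def cokernelButterflyHom (hT : T.ShortExact) (e : S.X₂ ≅ T.X₂) :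
    cokernel (S.f ≫ e.hom ≫ T.g) ⟶ cokernel (T.f ≫ e.inv ≫ S.g) :=
  haveI := hT.epi_g
  cokernel.desc _ (hT.exact.desc (e.inv ≫ S.g ≫ cokernel.π _)
    (by simpa only [Category.assoc] using cokernel.condition (T.f ≫ e.inv ≫ S.g)))
    (by simp)

/-- Both kernels are the intersection of the subobjects `S.X₁` and `T.X₁` of the middle term,
and both cokernels below are its quotient by their sum. -/
noncomputable def kernelButterflyIso (hS : S.ShortExact) (hT : T.ShortExact)
    (e : S.X₂ ≅ T.X₂) : kernel (S.f ≫ e.hom ≫ T.g) ≅ kernel (T.f ≫ e.inv ≫ S.g) where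
  hom := kernelButterflyHom hT e
  inv := kernelButterflyHom hS e.symm
  hom_inv_id := by
    have := hS.mono_f
    ext
    rw [← cancel_mono S.f]
    simp [kernelButterflyHom]
  inv_hom_id := by
    have := hT.mono_f
    ext
    rw [← cancel_mono T.f]
    simp [kernelButterflyHom]

noncomputable def cokernelButterflyIso (hS : S.ShortExact) (hT : T.ShortExact)
    (e : S.X₂ ≅ T.X₂) : cokernel (S.f ≫ e.hom ≫ T.g) ≅ cokernel (T.f ≫ e.inv ≫ S.g) where
  hom := cokernelButterflyHom hT e
  inv := cokernelButterflyHom hS e.symm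
  hom_inv_id := by
    have := hT.epi_g
    ext
    rw [← cancel_epi T.g]
    simp [cokernelButterflyHom]
  inv_hom_id := by
    have := hS.epi_g
    ext
    rw [← cancel_epi S.g]
    simp [cokernelButterflyHom]

end Butterfly

/-- `HasFactors χ S Z n`: `Z` has (at least) `n` composition factors `χ`-equivalent to `S`,
witnessed by a tree of extensions. -/
inductive HasFactors (χ : A → ℕ) (S : A) : A → ℕ → Prop
  | zero (Z : A) : HasFactors χ S Z 0
  | single {Z : A} : ChiEquiv χ S Z → HasFactors χ S Z 1
  | extension {T : ShortComplex A} (hT : T.ShortExact) {a b : ℕ} :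
      HasFactors χ S T.X₁ a → HasFactors χ S T.X₃ b → HasFactors χ S T.X₂ (a + b)

namespace HasFactors

variable {χ ψ : A → ℕ} {S Z : A} {n : ℕ}

theorem mul_le (h : HasFactors χ S Z n) (hψ : IsAdditiveFn ψ) (hle : ∀ X, ψ X ≤ χ X) :
    n * ψ S ≤ ψ Z := by
  induction h with
  | zero => simp
  | single h => rw [one_mul, hψ.eq_of_chiEquiv hle h]
  | extension hT _ _ ih₁ ih₃ => rw [hψ _ hT, add_mul]; omega

theorem le_apply (h : HasFactors χ S Z n) (hχ : IsAdditiveFn χ) (hS : χ S ≠ 0) : n ≤ χ Z :=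
  (Nat.le_mul_of_pos_right n (Nat.pos_of_ne_zero hS)).trans (h.mul_le hχ fun _ => le_rfl)

theorem of_chiEquiv {S' : A} (h : HasFactors χ S Z n) (hS : ChiEquiv χ S S') :
    HasFactors χ S' Z n := by
  induction h with
  | zero => exact .zero _
  | single h => exact .single (.trans _ _ _ (.symm _ _ hS) h)
  | extension hT _ _ ih₁ ih₃ => exact .extension hT ih₁ ih₃

theorem of_iso {Z' : A} (h : HasFactors χ S Z n) (hχ : IsAdditiveFn χ) (e : Z ≅ Z') :
    HasFactors χ S Z' n := by
  induction h generalizing Z' with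
  | zero => exact .zero _
  | single h => exact .single (.trans _ _ _ h (hχ.chiEquiv_of_iso e))
  | @extension T hT _ _ h₁ h₃ _ _ =>
    exact .extension (T := ShortComplex.mk (T.f ≫ e.hom) (e.inv ≫ T.g) (by simp))
      (ShortComplex.shortExact_of_iso
        (ShortComplex.isoMk (S₁ := T) (Iso.refl _) e (Iso.refl _) (by simp) (by simp)) hT)
      h₁ h₃

theorem exists_split (h : HasFactors χ S Z n) (hχ : IsAdditiveFn χ) (hS : ChiSimple χ S)
    {T : ShortComplex A} (hT : T.ShortExact) (e : T.X₂ ≅ Z) :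
    ∃ a b, n ≤ a + b ∧ HasFactors χ S T.X₁ a ∧ HasFactors χ S T.X₃ b := by
  induction h generalizing T with
  | zero => exact ⟨0, 0, le_rfl, .zero _, .zero _⟩
  | single h =>
    have hS₂ : ChiEquiv χ S T.X₂ := .trans _ _ _ h (hχ.chiEquiv_of_iso e.symm)
    rcases hχ.chiEquiv_or_chiEquiv_of_shortExact hT ((hχ.chiSimple_iff_of_chiEquiv hS₂).1 hS)
      with ⟨-, h₃⟩ | ⟨h₁, -⟩
    · exact ⟨0, 1, le_rfl, .zero _, .single (.trans _ _ _ hS₂ h₃)⟩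
    · exact ⟨1, 0, le_rfl, .single (.trans _ _ _ hS₂ (.symm _ _ h₁)), .zero _⟩
  | @extension U hU _ _ _ _ ih₁ ih₃ =>
    -- Schreier refinement: cut `U.X₁` by `f₂` and `U.X₃` by `f₁`; the butterfly isomorphisms
    -- move the four pieces onto `T.X₁ = ker f₁ + coim f₁` and `T.X₃ = im f₂ + coker f₂`.
    let f₁ := T.f ≫ e.hom ≫ U.g
    let f₂ := U.f ≫ e.inv ≫ T.g
    obtain ⟨a₁, a₂, ha, hK, hI₂⟩ :=
      ih₁ (T := .mk _ _ (cokernel.condition (kernel.ι f₂)))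
        { exact := ShortComplex.exact_cokernel _ } (Iso.refl _)
    obtain ⟨b₁, b₂, hb, hI₁, hC⟩ :=
      ih₃ (T := .mk _ _ (kernel.condition (cokernel.π f₁)))
        { exact := ShortComplex.exact_kernel _ } (Iso.refl _)
    refine ⟨a₁ + b₁, a₂ + b₂, by omega, ?_, ?_⟩
    · exact .extension (T := .mk _ _ (cokernel.condition (kernel.ι f₁)))
        { exact := ShortComplex.exact_cokernel _ } (hK.of_iso hχ (kernelButterflyIso hU hT e.symm))
        (hI₁.of_iso hχ (Abelian.coimageIsoImage f₁).symm)
    · exact .extension (T := .mk _ _ (kernel.condition (cokernel.π f₂)))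
        { exact := ShortComplex.exact_kernel _ } (hI₂.of_iso hχ (Abelian.coimageIsoImage f₂))
        (hC.of_iso hχ (cokernelButterflyIso hT hU e))

end HasFactors

namespace IsAdditiveFn

variable {χ ψ : A → ℕ}

@[elab_as_elim]
theorem induction_on (hχ : IsAdditiveFn χ) {P : A → Prop} (null : ∀ Z, χ Z = 0 → P Z)
    (simple : ∀ Z, ChiSimple χ Z → P Z)
    (extension : ∀ T : ShortComplex A, T.ShortExact → P T.X₁ → P T.X₃ → P T.X₂) (Z : A) :
    P Z := by
  suffices ∀ n Z, χ Z = n → P Z from this _ Z rfl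
  intro n
  induction n using Nat.strong_induction_on with
  | _ n ih =>
  rintro Z rfl
  by_cases h0 : χ Z = 0
  · exact null Z h0
  by_cases hs : ChiSimple χ Z
  · exact simple Z hs
  obtain ⟨Y, i, hi, hY0, hYZ⟩ : ∃ (Y : A) (i : Y ⟶ Z), Mono i ∧ χ Y ≠ 0 ∧ χ Y ≠ χ Z := by
    simpa [ChiSimple, h0] using hs
  have := hχ.eq_add_cokernel_of_mono i
  exact extension (.mk i (cokernel.π i) (cokernel.condition i))
    { exact := ShortComplex.exact_cokernel i } (ih _ (by omega) Y rfl)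
    (ih _ (by omega) (cokernel i) rfl)

theorem ext_of_chiSimple (hχ : IsAdditiveFn χ) {φ : A → ℕ} (hφ : IsAdditiveFn φ)
    (hψ : IsAdditiveFn ψ) (null : ∀ Z, χ Z = 0 → φ Z = ψ Z)
    (simple : ∀ Z, ChiSimple χ Z → φ Z = ψ Z) : φ = ψ :=
  funext <| hχ.induction_on null simple fun T hT h₁ h₃ => by rw [hφ T hT, hψ T hT, h₁, h₃]

theorem eq_zero_of_chiSimple (hχ : IsAdditiveFn χ) (hψ : IsAdditiveFn ψ)
    (null : ∀ Z, χ Z = 0 → ψ Z = 0) (simple : ∀ Z, ChiSimple χ Z → ψ Z = 0) (Z : A) :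
    ψ Z = 0 :=
  hχ.induction_on null simple (fun T hT h₁ h₃ => by rw [hψ T hT, h₁, h₃]) Z

end IsAdditiveFn

/-- The Jordan–Hölder multiplicity `[Z : S]` of the `χ`-simple object `S` in `Z`. -/
noncomputable def factorCount (χ : A → ℕ) (S Z : A) : ℕ :=
  sSup {n | HasFactors χ S Z n}

theorem factorCount_congr {χ : A → ℕ} {S S' : A} (h : ChiEquiv χ S S') :
    factorCount χ S = factorCount χ S' := by
  funext Z
  exact congrArg sSup <| Set.ext fun n =>
    ⟨fun hn => hn.of_chiEquiv h, fun hn => hn.of_chiEquiv (.symm _ _ h)⟩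

namespace IsAdditiveFn

variable {χ ψ : A → ℕ} {S Z : A}

theorem bddAbove_hasFactors (hχ : IsAdditiveFn χ) (hS : χ S ≠ 0) (Z : A) :
    BddAbove {n | HasFactors χ S Z n} :=
  ⟨χ Z, fun _ h => h.le_apply hχ hS⟩

theorem hasFactors_factorCount (hχ : IsAdditiveFn χ) (hS : χ S ≠ 0) (Z : A) :
    HasFactors χ S Z (factorCount χ S Z) :=
  Nat.sSup_mem ⟨0, .zero _⟩ (hχ.bddAbove_hasFactors hS Z)

theorem le_factorCount (hχ : IsAdditiveFn χ) (hS : χ S ≠ 0) {n : ℕ} (h : HasFactors χ S Z n) :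
    n ≤ factorCount χ S Z :=
  le_csSup (hχ.bddAbove_hasFactors hS Z) h

theorem factorCount_mul_le (hχ : IsAdditiveFn χ) (hS : χ S ≠ 0) (hψ : IsAdditiveFn ψ)
    (hle : ∀ X, ψ X ≤ χ X) (Z : A) : factorCount χ S Z * ψ S ≤ ψ Z :=
  (hχ.hasFactors_factorCount hS Z).mul_le hψ hle

theorem factorCount_le (hχ : IsAdditiveFn χ) (hS : χ S ≠ 0) (Z : A) : factorCount χ S Z ≤ χ Z :=
  (hχ.hasFactors_factorCount hS Z).le_apply hχ hS

theorem factorCount_self (hχ : IsAdditiveFn χ) (hS : ChiSimple χ S) : factorCount χ S S = 1 := by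
  have h₁ := hχ.le_factorCount hS.1 (.single (.refl S))
  have h₂ := hχ.factorCount_mul_le hS.1 hχ (fun _ => le_rfl) S
  have := Nat.le_of_mul_le_mul_right (h₂.trans (one_mul _).ge) (Nat.pos_of_ne_zero hS.1)
  omega

theorem isAdditiveFn_factorCount (hχ : IsAdditiveFn χ) (hS : ChiSimple χ S) :
    IsAdditiveFn (factorCount χ S) := by
  intro T hT
  have h₁ := hχ.hasFactors_factorCount hS.1 T.X₁
  have h₃ := hχ.hasFactors_factorCount hS.1 T.X₃
  obtain ⟨a, b, hab, ha, hb⟩ :=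
    (hχ.hasFactors_factorCount hS.1 T.X₂).exists_split hχ hS hT (Iso.refl _)
  have := hχ.le_factorCount hS.1 ha
  have := hχ.le_factorCount hS.1 hb
  have := hχ.le_factorCount hS.1 (.extension hT h₁ h₃)
  omega

theorem chiEquiv_of_hasFactors (hχ : IsAdditiveFn χ) (hS : ChiSimple χ S) {n : ℕ}
    (h : HasFactors χ S Z n) (hn : n ≠ 0) (hZ : ChiSimple χ Z) : ChiEquiv χ S Z := by
  induction h with
  | zero => exact absurd rfl hn
  | single h => exact h
  | @extension T hT a b ha hb ih₁ ih₃ =>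
    rcases hχ.chiEquiv_or_chiEquiv_of_shortExact hT hZ with ⟨h₁, h₃⟩ | ⟨h₁, h₃⟩
    · have : a = 0 := Nat.le_zero.1 (h₁ ▸ ha.le_apply hχ hS.1)
      exact .trans _ _ _ (ih₃ (by omega) ((hχ.chiSimple_iff_of_chiEquiv h₃).1 hZ)) (.symm _ _ h₃)
    · have : b = 0 := Nat.le_zero.1 (h₃ ▸ hb.le_apply hχ hS.1)
      exact .trans _ _ _ (ih₁ (by omega) ((hχ.chiSimple_iff_of_chiEquiv h₁).2 hZ)) h₁

theorem chiEquiv_of_factorCount_ne_zero (hχ : IsAdditiveFn χ) (hS : ChiSimple χ S)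
    (hZ : ChiSimple χ Z) (h : factorCount χ S Z ≠ 0) : ChiEquiv χ S Z :=
  hχ.chiEquiv_of_hasFactors hS (hχ.hasFactors_factorCount hS.1 Z) h hZ

theorem eq_zero_of_le_factorCount (hχ : IsAdditiveFn χ) (hS : ChiSimple χ S)
    (hψ : IsAdditiveFn ψ) (hle : ∀ X, ψ X ≤ factorCount χ S X) (hψS : ψ S = 0) (Z : A) :
    ψ Z = 0 := by
  have hleχ X : ψ X ≤ χ X := (hle X).trans (hχ.factorCount_le hS.1 X)
  refine hχ.eq_zero_of_chiSimple hψ (fun X hX => Nat.le_zero.1 (hX ▸ hleχ X)) (fun X hX => ?_) Z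
  by_cases h : factorCount χ S X = 0
  · exact Nat.le_zero.1 (h ▸ hle X)
  · rw [← hψ.eq_of_chiEquiv hleχ (hχ.chiEquiv_of_factorCount_ne_zero hS hX h), hψS]

theorem isIrreducibleAdd_factorCount (hχ : IsAdditiveFn χ) (hS : ChiSimple χ S) :
    IsIrreducibleAdd (factorCount χ S) := by
  refine ⟨⟨S, by simp [hχ.factorCount_self hS]⟩, fun φ ψ hφ hψ hsum => ?_⟩
  have hS₁ := hsum S
  rw [hχ.factorCount_self hS] at hS₁
  have hφle X : φ X ≤ factorCount χ S X := by have := hsum X; omega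
  have hψle X : ψ X ≤ factorCount χ S X := by have := hsum X; omega
  rcases Nat.eq_zero_or_pos (φ S) with h | h
  · exact .inl (hχ.eq_zero_of_le_factorCount hS hφ hφle h)
  · exact .inr (hχ.eq_zero_of_le_factorCount hS hψ hψle (by omega))

theorem exists_eq_factorCount (hχ : IsAdditiveFn χ) (hψ : IsAdditiveFn ψ)
    (hirr : IsIrreducibleAdd ψ) (hle : ∀ X, ψ X ≤ χ X) :
    ∃ S, ChiSimple χ S ∧ ψ = factorCount χ S := by
  obtain ⟨S, hS, hψS⟩ : ∃ S, ChiSimple χ S ∧ ψ S ≠ 0 := by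
    by_contra! h
    obtain ⟨X, hX⟩ := hirr.1
    exact hX (hχ.eq_zero_of_chiSimple hψ (fun Z hZ => Nat.le_zero.1 (hZ ▸ hle Z)) h X)
  have hmul : (fun X => ψ S * factorCount χ S X) = ψ :=
    hirr.eq_of_le hψ ((hχ.isAdditiveFn_factorCount hS).const_mul _)
      (fun X => mul_comm (ψ S) _ ▸ hχ.factorCount_mul_le hS.1 hψ hle X)
      ⟨S, by simp [hχ.factorCount_self hS, hψS]⟩
  exact ⟨S, hS, hirr.eq_of_eq_mul (hχ.isAdditiveFn_factorCount hS) fun X => (congrFun hmul X).symm⟩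

end IsAdditiveFn

abbrev IrreducibleAdditiveFn (A : Type u) [Category.{v} A] [Abelian A] :=
  {ψ : A → ℕ // IsAdditiveFn ψ ∧ IsIrreducibleAdd ψ}

def IsIrreducibleDecomposition (χ : A → ℕ) (m : IrreducibleAdditiveFn A → ℕ) : Prop :=
  (∀ X, (Function.support fun ψ : IrreducibleAdditiveFn A => m ψ * ψ.1 X).Finite) ∧
    ∀ X, χ X = ∑ᶠ ψ : IrreducibleAdditiveFn A, m ψ * ψ.1 X

open Classical in
/-- The multiplicity `χ S` of the irreducible summand `factorCount χ S`; well defined because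
`factorCount χ S` determines `S` up to `χ`-equivalence. -/
noncomputable def decompositionCoeff (χ : A → ℕ) (ψ : IrreducibleAdditiveFn A) : ℕ :=
  if h : ∃ S, ChiSimple χ S ∧ ψ.1 = factorCount χ S then χ h.choose else 0

theorem exists_eq_factorCount_of_coeff_ne_zero {χ : A → ℕ} {ψ : IrreducibleAdditiveFn A}
    (h : decompositionCoeff χ ψ ≠ 0) : ∃ S, ChiSimple χ S ∧ ψ.1 = factorCount χ S := by
  by_contra h'
  exact h (dif_neg h')

namespace IsAdditiveFn

variable {χ : A → ℕ} {S Z : A} {m : IrreducibleAdditiveFn A → ℕ}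

noncomputable def irreducibleFactorCount (hχ : IsAdditiveFn χ) (hS : ChiSimple χ S) :
    IrreducibleAdditiveFn A :=
  ⟨factorCount χ S, hχ.isAdditiveFn_factorCount hS, hχ.isIrreducibleAdd_factorCount hS⟩

theorem decompositionCoeff_irreducibleFactorCount (hχ : IsAdditiveFn χ) (hS : ChiSimple χ S) :
    decompositionCoeff χ (hχ.irreducibleFactorCount hS) = χ S := by
  have h : ∃ T, ChiSimple χ T ∧ (hχ.irreducibleFactorCount hS).1 = factorCount χ T :=
    ⟨S, hS, rfl⟩
  rw [decompositionCoeff, dif_pos h]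
  obtain ⟨hT, hST⟩ := h.choose_spec
  refine hχ.eq_of_chiEquiv (fun _ => le_rfl) (hχ.chiEquiv_of_factorCount_ne_zero hT hS ?_)
  rw [← hST]
  exact (hχ.factorCount_self hS).trans_ne one_ne_zero

theorem mul_apply_eq_zero_of_null (hχ : IsAdditiveFn χ)
    (hm : ∀ ψ, m ψ ≠ 0 → ∃ S, ChiSimple χ S ∧ ψ.1 = factorCount χ S) (hZ : χ Z = 0)
    (ψ : IrreducibleAdditiveFn A) : m ψ * ψ.1 Z = 0 := by
  by_contra h
  obtain ⟨S, hS, hψ⟩ := hm ψ (left_ne_zero_of_mul h)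
  have : ψ.1 Z ≤ χ Z := (congrFun hψ Z).le.trans (hχ.factorCount_le hS.1 Z)
  exact right_ne_zero_of_mul h (by omega)

theorem mul_apply_eq_zero_of_chiSimple (hχ : IsAdditiveFn χ)
    (hm : ∀ ψ, m ψ ≠ 0 → ∃ S, ChiSimple χ S ∧ ψ.1 = factorCount χ S) (hZ : ChiSimple χ Z)
    {ψ : IrreducibleAdditiveFn A} (hψ : ψ ≠ hχ.irreducibleFactorCount hZ) : m ψ * ψ.1 Z = 0 := by
  by_contra h
  obtain ⟨S, hS, hψS⟩ := hm ψ (left_ne_zero_of_mul h)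
  have hSZ := hχ.chiEquiv_of_factorCount_ne_zero hS hZ (hψS ▸ right_ne_zero_of_mul h)
  exact hψ (Subtype.ext (hψS.trans (factorCount_congr hSZ)))

theorem finsum_mul_apply_of_chiSimple (hχ : IsAdditiveFn χ)
    (hm : ∀ ψ, m ψ ≠ 0 → ∃ S, ChiSimple χ S ∧ ψ.1 = factorCount χ S) (hZ : ChiSimple χ Z) :
    ∑ᶠ ψ : IrreducibleAdditiveFn A, m ψ * ψ.1 Z = m (hχ.irreducibleFactorCount hZ) := by
  rw [finsum_eq_single _ _ fun ψ => hχ.mul_apply_eq_zero_of_chiSimple hm hZ]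
  show m _ * factorCount χ Z Z = _
  rw [hχ.factorCount_self hZ, mul_one]

theorem support_mul_apply_finite (hχ : IsAdditiveFn χ)
    (hm : ∀ ψ, m ψ ≠ 0 → ∃ S, ChiSimple χ S ∧ ψ.1 = factorCount χ S) (Z : A) :
    (Function.support fun ψ : IrreducibleAdditiveFn A => m ψ * ψ.1 Z).Finite := by
  refine hχ.induction_on (fun Z hZ => ?_) (fun Z hZ => ?_) (fun T hT h₁ h₃ => ?_) Z
  · simp [hχ.mul_apply_eq_zero_of_null hm hZ]
  · refine (Set.finite_singleton (hχ.irreducibleFactorCount hZ)).subset fun ψ hψ => ?_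
    by_contra hne
    exact hψ (hχ.mul_apply_eq_zero_of_chiSimple hm hZ hne)
  · refine (h₁.union h₃).subset fun ψ hψ => ?_
    simp only [Set.mem_union, Function.mem_support, ψ.2.1 T hT, mul_add] at hψ ⊢
    omega

theorem isIrreducibleDecomposition_coeff (hχ : IsAdditiveFn χ) :
    IsIrreducibleDecomposition χ (decompositionCoeff χ) := by
  have hm ψ := exists_eq_factorCount_of_coeff_ne_zero (χ := χ) (ψ := ψ)
  have hfin := hχ.support_mul_apply_finite hm
  refine ⟨hfin, congrFun <| hχ.ext_of_chiSimple hχ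
    (isAdditiveFn_finsum (fun ψ => ψ.2.1.const_mul _) hfin) (fun Z hZ => ?_) (fun Z hZ => ?_)⟩
  · rw [hZ, finsum_eq_zero_of_forall_eq_zero (hχ.mul_apply_eq_zero_of_null hm hZ)]
  · rw [hχ.finsum_mul_apply_of_chiSimple hm hZ, hχ.decompositionCoeff_irreducibleFactorCount hZ]

theorem eq_coeff_of_isIrreducibleDecomposition (hχ : IsAdditiveFn χ)
    (h : IsIrreducibleDecomposition χ m) : m = decompositionCoeff χ := by
  have hm ψ (hψ : m ψ ≠ 0) : ∃ S, ChiSimple χ S ∧ ψ.1 = factorCount χ S := by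
    refine hχ.exists_eq_factorCount ψ.2.1 ψ.2.2 fun X => ?_
    calc ψ.1 X ≤ m ψ * ψ.1 X := Nat.le_mul_of_pos_left _ (Nat.pos_of_ne_zero hψ)
      _ ≤ ∑ᶠ ψ', m ψ' * ψ'.1 X := single_le_finsum ψ (h.1 X) fun _ => Nat.zero_le _
      _ = χ X := (h.2 X).symm
  funext ψ
  by_cases hψ : ∃ S, ChiSimple χ S ∧ ψ.1 = factorCount χ S
  · obtain ⟨S, hS, hψS⟩ := hψ
    obtain rfl : ψ = hχ.irreducibleFactorCount hS := Subtype.ext hψS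
    rw [hχ.decompositionCoeff_irreducibleFactorCount hS, h.2 S,
      hχ.finsum_mul_apply_of_chiSimple hm hS]
  · rw [decompositionCoeff, dif_neg hψ]
    by_contra h'
    exact hψ (hm ψ h')

end IsAdditiveFn

theorem additive_eq_unique_locally_finite_sum_of_irreducibles_general
    {A : Type u} [Category.{v} A] [Abelian A]
    (χ : A → ℕ) (hχ : IsAdditiveFn χ) :
    ∃! m : {ψ : A → ℕ // IsAdditiveFn ψ ∧ IsIrreducibleAdd ψ} → ℕ,
      (∀ X : A, (Function.support fun ψ : {ψ : A → ℕ // IsAdditiveFn ψ ∧ IsIrreducibleAdd ψ} =>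
          m ψ * ψ.1 X).Finite) ∧
      ∀ X : A, χ X = ∑ᶠ ψ : {ψ : A → ℕ // IsAdditiveFn ψ ∧ IsIrreducibleAdd ψ}, m ψ * ψ.1 X :=
  ⟨decompositionCoeff χ, hχ.isIrreducibleDecomposition_coeff,
    fun _ hm => hχ.eq_coeff_of_isIrreducibleDecomposition hm⟩

/-- Every additive function on an (essentially small) abelian category
can be written uniquely as a locally finite sum of irreducible additive functions;
the decomposition is recorded by the multiplicity function `m` on the set of
irreducible additive functions.  Local finiteness: for each object `X` only finitely
many summands are non-zero at `X`. -/
theorem additive_eq_unique_locally_finite_sum_of_irreducibles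
    {A : Type u} [Category.{v} A] [EssentiallySmall.{v} A] [Abelian A]
    (χ : A → ℕ) (hχ : IsAdditiveFn χ) :
    ∃! m : {ψ : A → ℕ // IsAdditiveFn ψ ∧ IsIrreducibleAdd ψ} → ℕ,
      (∀ X : A, (Function.support fun ψ : {ψ : A → ℕ // IsAdditiveFn ψ ∧ IsIrreducibleAdd ψ} =>
          m ψ * ψ.1 X).Finite) ∧
      ∀ X : A, χ X = ∑ᶠ ψ : {ψ : A → ℕ // IsAdditiveFn ψ ∧ IsIrreducibleAdd ψ}, m ψ * ψ.1 X :=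
  additive_eq_unique_locally_finite_sum_of_irreducibles_general χ hχ
end

section
/- Let A be an essentially small abelian category, X ∈ A, and n ≥ 0. Then the set U_{X,n} = {χ ∈ Sp A : χ(X) ≤ n} is closed in the Ziegler topology on the space Sp A of irreducible additive functions. -/
open CategoryTheory CategoryTheory.Limits

universe v u

/-- The space `Sp A` of irreducible additive functions on `A`. -/
def SpFn (A : Type u) [Category.{v} A] [Abelian A] :=
  {χ : A → ℕ // IsAdditiveFn χ ∧ IsIrreducibleAdd χ}

/-- The Ziegler topology on `Sp A`, generated by the basic open sets
`(Y) = {χ | χ Y ≠ 0}` for `Y` an object of `A`. -/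
instance SpFn.topologicalSpace (A : Type u) [Category.{v} A] [Abelian A] :
    TopologicalSpace (SpFn A) :=
  TopologicalSpace.generateFrom {U | ∃ Y : A, U = {χ : SpFn A | χ.1 Y ≠ 0}}

/-!
An irreducible additive function `χ` coincides with the function `ℓ_χ` sending `X` to the largest
number of factors `Q` with `χ Q ≠ 0` in a finite filtration of `X`. Indeed `ℓ_χ ≤ χ`, `ℓ_χ` is
nonzero wherever `χ` is, and `ℓ_χ` is additive: superadditive by splicing filtrations of the
two ends of a short exact sequence, subadditive by cutting a filtration of the middle term down
to the subobject and pushing it to the quotient. So if `χ X > n`, some filtration of `X` has more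
than `n` factors `Q` with `χ Q ≠ 0`; the basic open sets `(Q)` of these factors cut out a
neighbourhood of `χ`, and every `χ'` in it has `χ' X = ∑ χ' Q > n`.
-/

theorem List.countP_le_sum_map {α : Type*} (p : α → Bool) (f : α → ℕ) :
    ∀ l : List α, (∀ a ∈ l, p a → f a ≠ 0) → l.countP p ≤ (l.map f).sum
  | [], _ => by simp
  | a :: l, h => by
    have ih := List.countP_le_sum_map p f l fun b hb => h b (List.mem_cons_of_mem a hb)
    have ha := h a List.mem_cons_self
    rw [List.countP_cons, List.map_cons, List.sum_cons]
    split_ifs <;> grind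

def nonzeroCount {α : Type*} (χ : α → ℕ) (Qs : List α) : ℕ :=
  Qs.countP (fun Q => χ Q ≠ 0)

lemma nonzeroCount_cons_le_add {α : Type*} {χ : α → ℕ} {Q Q₁ Q₂ : α} {Qs Qs₁ Qs₂ : List α}
    (hQ : χ Q = χ Q₁ + χ Q₂)
    (h : nonzeroCount χ Qs ≤ nonzeroCount χ Qs₁ + nonzeroCount χ Qs₂) :
    nonzeroCount χ (Q :: Qs) ≤ nonzeroCount χ (Q₁ :: Qs₁) + nonzeroCount χ (Q₂ :: Qs₂) := by
  simp only [nonzeroCount, List.countP_cons] at h ⊢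
  split_ifs <;> simp_all <;> omega

namespace CategoryTheory.ShortComplex

variable {A : Type u} [Category.{v} A] [Abelian A]

lemma shortExact_cokernel {Y X : A} (f : Y ⟶ X) [Mono f] :
    (ShortComplex.mk f (cokernel.π f) (cokernel.condition f)).ShortExact :=
  { exact := exact_cokernel f }

lemma shortExact_kernel_factorThruImage {X Y : A} (f : X ⟶ Y) :
    (ShortComplex.mk (kernel.ι f) (factorThruImage f)
      (comp_factorThruImage_eq_zero (kernel.condition f))).ShortExact := by
  let φ : ShortComplex.mk (kernel.ι f) (factorThruImage f)
      (comp_factorThruImage_eq_zero (kernel.condition f)) ⟶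
      ShortComplex.mk (kernel.ι f) f (kernel.condition f) :=
    { τ₁ := 𝟙 _, τ₂ := 𝟙 _, τ₃ := image.ι f }
  exact { exact := (exact_iff_of_epi_of_isIso_of_mono φ).2 (exact_kernel f) }

lemma ShortExact.shortExact_pullback_snd {S : ShortComplex A} (hS : S.ShortExact)
    {Z : A} (u : Z ⟶ S.X₃) :
    (ShortComplex.mk (pullback.lift S.f 0 (by simp)) (pullback.snd S.g u)
      (pullback.lift_snd _ _ _)).ShortExact := by
  have := hS.mono_f
  have := hS.epi_g
  have : Mono (pullback.lift S.f 0 (by simp) : S.X₁ ⟶ pullback S.g u) :=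
    mono_of_mono_fac (pullback.lift_fst _ _ _)
  refine { exact := exact_of_f_is_kernel _ (KernelFork.IsLimit.ofι' _ _ fun k hk => ?_) }
  have hk' : (k ≫ pullback.fst S.g u) ≫ S.g = 0 := by
    rw [Category.assoc, pullback.condition, ← Category.assoc, hk, zero_comp]
  refine ⟨hS.exact.lift _ hk', pullback.hom_ext ?_ ?_⟩
  · simp only [Category.assoc, pullback.lift_fst, Exact.lift_f]
  · simp only [Category.assoc, pullback.lift_snd, comp_zero, hk]

lemma ShortExact.shortExact_pullback_fst {T : ShortComplex A} (hT : T.ShortExact)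
    {X : A} (g : X ⟶ T.X₂) [Epi g] :
    (ShortComplex.mk (pullback.fst g T.f) (g ≫ T.g) (by
      rw [← Category.assoc, pullback.condition, Category.assoc, T.zero, comp_zero])
    ).ShortExact := by
  have := hT.mono_f
  have := hT.epi_g
  refine { exact := exact_of_f_is_kernel _ (KernelFork.IsLimit.ofι' _ _ fun k hk => ?_) }
  have hk' : (k ≫ g) ≫ T.g = 0 := by simpa using hk
  exact ⟨pullback.lift k _ (hT.exact.lift_f _ hk').symm, pullback.lift_fst _ _ _⟩

end CategoryTheory.ShortComplex

open CategoryTheory.ShortComplex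

section Filtration

variable {A : Type u} [Category.{v} A] [Abelian A]

/-- `HasFiltration X [Q₁, …, Qₖ]`: there is a chain of subobjects
`0 = Xₖ ⊆ ⋯ ⊆ X₁ ⊆ X₀ = X` with `X_{i-1} / X_i ≅ Qᵢ`, so the head of the list is the top factor. -/
def HasFiltration : A → List A → Prop
  | X, [] => IsZero X
  | X, Q :: Qs => ∃ (Y : A) (f : Y ⟶ X) (g : X ⟶ Q) (w : f ≫ g = 0),
      (ShortComplex.mk f g w).ShortExact ∧ HasFiltration Y Qs

lemma HasFiltration.cons_cokernel {Y X : A} {Qs : List A} (f : Y ⟶ X) [Mono f]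
    (h : HasFiltration Y Qs) : HasFiltration X (cokernel f :: Qs) :=
  ⟨Y, f, cokernel.π f, cokernel.condition f, shortExact_cokernel f, h⟩

open ZeroObject in
lemma hasFiltration_singleton (X : A) : HasFiltration X [X] := by
  have : Mono (0 : (0 : A) ⟶ X) := (isZero_zero A).mono _
  exact ⟨0, 0, 𝟙 X, by simp, { exact := (exact_iff_mono _ rfl).2 inferInstance }, isZero_zero A⟩

lemma HasFiltration.of_iso {X X' : A} (e : X ≅ X') :
    ∀ {Qs : List A}, HasFiltration X Qs → HasFiltration X' Qs
  | [], h => IsZero.of_iso h e.symm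
  | _ :: _, ⟨Y, f, g, w, hS, hY⟩ =>
    ⟨Y, f ≫ e.hom, e.inv ≫ g, by simp [w],
      shortExact_of_iso (S₁ := .mk f g w)
        (ShortComplex.isoMk (Iso.refl _) e (Iso.refl _) (by simp) (by simp)) hS, hY⟩

lemma HasFiltration.append :
    ∀ (Rs : List A) {S : ShortComplex A} {Qs : List A}, S.ShortExact →
      HasFiltration S.X₁ Qs → HasFiltration S.X₃ Rs → HasFiltration S.X₂ (Rs ++ Qs)
  | [], S, _, hS, hQs, hZ => by
    have := hS.mono_f
    have : Epi S.f := (exact_iff_epi _ (hZ.eq_of_tgt _ _)).1 hS.exact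
    have : IsIso S.f := isIso_of_mono_of_epi _
    exact hQs.of_iso (asIso S.f)
  | R :: Rs, S, _, hS, hQs, ⟨_, u, _, _, hT, hRs⟩ => by
    have := hS.epi_g
    -- pull the filtration of `S.X₃` back to `S.X₂`
    exact ⟨_, _, _, _, hT.shortExact_pullback_fst S.g,
      append Rs (hS.shortExact_pullback_snd u) hQs hRs⟩

lemma HasFiltration.eq_sum_map {χ : A → ℕ} (hχ : IsAdditiveFn χ) :
    ∀ {X : A} {Qs : List A}, HasFiltration X Qs → χ X = (Qs.map χ).sum
  | X, [], h => by
    simpa using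
      hχ _ { exact := exact_of_isZero_X₂ (ShortComplex.mk (𝟙 X) (𝟙 X) (h.eq_of_src _ _)) h }
  | _, _ :: _, ⟨_, _, _, _, hS, hY⟩ => by
    rw [hχ _ hS, eq_sum_map hχ hY, List.map_cons, List.sum_cons, Nat.add_comm]

lemma HasFiltration.split {χ : A → ℕ} (hχ : IsAdditiveFn χ) :
    ∀ (Qs : List A) {S : ShortComplex A}, S.ShortExact → HasFiltration S.X₂ Qs →
      ∃ QsY QsZ, HasFiltration S.X₁ QsY ∧ HasFiltration S.X₃ QsZ ∧
        nonzeroCount χ Qs ≤ nonzeroCount χ QsY + nonzeroCount χ QsZ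
  | [], S, hS, hX => by
    have := hS.mono_f
    have := hS.epi_g
    exact ⟨[], [], hX.of_mono S.f, hX.of_epi S.g, le_rfl⟩
  | Q :: Qs, S, hS, ⟨X', m, _, _, hT, hX'⟩ => by
    have := hS.mono_f
    have := hT.mono_f
    -- `X'` meets `S.X₁` in `kernel k` and maps onto `image k` in `S.X₃`
    let k := m ≫ S.g
    obtain ⟨QsY, QsZ, hY, hZ, hcount⟩ := split hχ Qs (shortExact_kernel_factorThruImage k) hX'
    let l : kernel k ⟶ S.X₁ := hS.exact.lift (kernel.ι k ≫ m) (by simp [k])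
    have : Mono l := mono_of_mono_fac (hS.exact.lift_f _ _)
    refine ⟨_, _, hY.cons_cokernel l, hZ.cons_cokernel (image.ι k),
      nonzeroCount_cons_le_add ?_ hcount⟩
    have e₁ := hχ _ hS
    have e₂ := hχ _ hT
    have e₃ := hχ _ (shortExact_kernel_factorThruImage k)
    have e₄ := hχ _ (shortExact_cokernel l)
    have e₅ := hχ _ (shortExact_cokernel (image.ι k))
    dsimp only at e₁ e₂ e₃ e₄ e₅
    omega

end Filtration

section Length

variable {A : Type u} [Category.{v} A] [Abelian A]

lemma HasFiltration.nonzeroCount_le_of_ne_zero {χ χ' : A → ℕ} (hχ' : IsAdditiveFn χ') {X : A}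
    {Qs : List A} (h : HasFiltration X Qs) (hQs : ∀ Q ∈ Qs, χ Q ≠ 0 → χ' Q ≠ 0) :
    nonzeroCount χ Qs ≤ χ' X :=
  h.eq_sum_map hχ' ▸ List.countP_le_sum_map _ χ' Qs fun Q hQ hχQ => hQs Q hQ (by simpa using hχQ)

/-- The length of `X` in the Serre quotient of `A` by the objects on which `χ` vanishes. -/
noncomputable def filtrationLength (χ : A → ℕ) (X : A) : ℕ :=
  sSup {k | ∃ Qs, HasFiltration X Qs ∧ nonzeroCount χ Qs = k}

variable {χ : A → ℕ}

lemma bddAbove_setOf_nonzeroCount (hχ : IsAdditiveFn χ) (X : A) :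
    BddAbove {k | ∃ Qs, HasFiltration X Qs ∧ nonzeroCount χ Qs = k} :=
  ⟨χ X, by rintro _ ⟨Qs, h, rfl⟩; exact h.nonzeroCount_le_of_ne_zero hχ fun _ _ => id⟩

lemma exists_hasFiltration_nonzeroCount_eq (hχ : IsAdditiveFn χ) (X : A) :
    ∃ Qs, HasFiltration X Qs ∧ nonzeroCount χ Qs = filtrationLength χ X := by
  apply Nat.sSup_mem ?_ (bddAbove_setOf_nonzeroCount hχ X)
  exact ⟨_, [X], hasFiltration_singleton X, rfl⟩

lemma HasFiltration.nonzeroCount_le_filtrationLength (hχ : IsAdditiveFn χ) {X : A}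
    {Qs : List A} (h : HasFiltration X Qs) : nonzeroCount χ Qs ≤ filtrationLength χ X :=
  le_csSup (bddAbove_setOf_nonzeroCount hχ X) ⟨Qs, h, rfl⟩

lemma filtrationLength_le (hχ : IsAdditiveFn χ) (X : A) : filtrationLength χ X ≤ χ X := by
  obtain ⟨Qs, h, hcount⟩ := exists_hasFiltration_nonzeroCount_eq hχ X
  exact hcount ▸ h.nonzeroCount_le_of_ne_zero hχ fun _ _ => id

lemma filtrationLength_ne_zero (hχ : IsAdditiveFn χ) {X : A} (hX : χ X ≠ 0) :
    filtrationLength χ X ≠ 0 := by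
  have := (hasFiltration_singleton X).nonzeroCount_le_filtrationLength hχ
  simp [nonzeroCount, hX] at this
  omega

lemma isAdditiveFn_filtrationLength (hχ : IsAdditiveFn χ) :
    IsAdditiveFn (filtrationLength χ) := by
  intro S hS
  apply le_antisymm
  · obtain ⟨Qs, h, hcount⟩ := exists_hasFiltration_nonzeroCount_eq hχ S.X₂
    obtain ⟨QsY, QsZ, hY, hZ, hsplit⟩ := h.split hχ Qs hS
    exact hcount ▸ hsplit.trans (add_le_add (hY.nonzeroCount_le_filtrationLength hχ)
      (hZ.nonzeroCount_le_filtrationLength hχ))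
  · obtain ⟨Qs, hQs, hcountQ⟩ := exists_hasFiltration_nonzeroCount_eq hχ S.X₁
    obtain ⟨Rs, hRs, hcountR⟩ := exists_hasFiltration_nonzeroCount_eq hχ S.X₃
    have := (HasFiltration.append Rs hS hQs hRs).nonzeroCount_le_filtrationLength hχ
    rwa [nonzeroCount, List.countP_append, ← nonzeroCount, ← nonzeroCount, hcountQ, hcountR,
      add_comm] at this

end Length

section Irreducible

variable {A : Type u} [Category.{v} A] [Abelian A] {χ φ : A → ℕ}

lemma IsAdditiveFn.tsub_s15 (hχ : IsAdditiveFn χ) (hφ : IsAdditiveFn φ) (hle : ∀ X, φ X ≤ χ X) :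
    IsAdditiveFn (fun X => χ X - φ X) := by
  intro S hS
  show χ S.X₂ - φ S.X₂ = (χ S.X₁ - φ S.X₁) + (χ S.X₃ - φ S.X₃)
  have := hχ S hS
  have := hφ S hS
  have := hle S.X₁
  have := hle S.X₃
  omega

lemma IsIrreducibleAdd.eq_of_le_s15 (hirr : IsIrreducibleAdd χ) (hχ : IsAdditiveFn χ)
    (hφ : IsAdditiveFn φ) (hle : ∀ X, φ X ≤ χ X) (hne : ∃ X, φ X ≠ 0) : φ = χ := by
  rcases hirr.2 φ _ hφ (hχ.tsub_s15 hφ hle) fun X => (Nat.add_sub_of_le (hle X)).symm with h | h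
  · obtain ⟨X, hX⟩ := hne
    exact absurd (h X) hX
  · funext X
    have := h X
    have := hle X
    omega

lemma IsIrreducibleAdd.filtrationLength_eq (hirr : IsIrreducibleAdd χ) (hχ : IsAdditiveFn χ) :
    filtrationLength χ = χ :=
  have ⟨X, hX⟩ := hirr.1
  hirr.eq_of_le_s15 hχ (isAdditiveFn_filtrationLength hχ) (filtrationLength_le hχ)
    ⟨X, filtrationLength_ne_zero hχ hX⟩

end Irreducible

lemma SpFn.isOpen_setOf_forall_ne_zero {A : Type u} [Category.{v} A] [Abelian A] (l : List A) :
    IsOpen {χ : SpFn A | ∀ Q ∈ l, χ.1 Q ≠ 0} := by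
  simp only [Set.ofPred_forall]
  exact l.finite_toSet.isOpen_biInter fun Q _ =>
    TopologicalSpace.isOpen_generateFrom_of_mem ⟨Q, rfl⟩

theorem isClosed_le_setOf_additiveFn_general {A : Type u} [Category.{v} A] [Abelian A]
    (X : A) (n : ℕ) :
    IsClosed {χ : SpFn A | χ.1 X ≤ n} := by
  refine isOpen_compl_iff.1 (isOpen_iff_forall_mem_open.2 fun χ hχX => ?_)
  obtain ⟨Qs, hQs, hcount⟩ := exists_hasFiltration_nonzeroCount_eq χ.2.1 X
  rw [χ.2.2.filtrationLength_eq χ.2.1] at hcount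
  refine ⟨{χ' | ∀ Q ∈ Qs.filter (χ.1 · ≠ 0), χ'.1 Q ≠ 0}, fun χ' hχ' => ?_,
    SpFn.isOpen_setOf_forall_ne_zero _, fun Q hQ => by simpa using (List.mem_filter.1 hQ).2⟩
  have hle : nonzeroCount χ.1 Qs ≤ χ'.1 X := hQs.nonzeroCount_le_of_ne_zero χ'.2.1
    fun Q hQ hχQ => hχ' Q (List.mem_filter.2 ⟨hQ, by simpa using hχQ⟩)
  simp only [Set.mem_compl_iff, Set.mem_ofPred_eq, not_le] at hχX ⊢
  omega

/-- STATEMENT 16: For every object `X` and every `n ≥ 0`, the set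
`U_{X,n} = {χ ∈ Sp A | χ X ≤ n}` is closed in the Ziegler topology. -/
theorem isClosed_le_setOf_additiveFn {A : Type u} [Category.{v} A] [EssentiallySmall.{v} A] [Abelian A]
    (X : A) (n : ℕ) :
    IsClosed {χ : SpFn A | χ.1 X ≤ n} :=
  isClosed_le_setOf_additiveFn_general X n
end

section
/- Let A be a ring without invariant basis number such that A^m ≅ A^n as A-modules for some m ≠ n. Then every A-module of finite endolength (i.e., of finite length over its endomorphism ring) is zero, and consequently every endofinite cohomological functor H : D^b(proj A)^op → Ab is zero. -/
open CategoryTheory CategoryTheory.Limits CategoryTheory.Pretriangulated Opposite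

universe v u

variable {C : Type u} [Category.{v} C] [HasZeroObject C] [HasShift C ℤ] [Preadditive C]
  [∀ n : ℤ, (CategoryTheory.shiftFunctor C n).Additive] [Pretriangulated C]

/-- The ℤ-indexed long sequence `⋯ → Σ⁻¹C → A → B → C → ΣA → ΣB → ⋯` induced by a
triangle `A → B → C`; the object in position `i` is `Σ^{i/3}` applied to `A`, `B`
or `C` according to `i mod 3`. -/
noncomputable def triSeq (T : Triangle C) (i : ℤ) : C :=
  if i % 3 = 0 then T.obj₁⟦i / 3⟧ else if i % 3 = 1 then T.obj₂⟦i / 3⟧ else T.obj₃⟦i / 3⟧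

/-- A function `χ : Ob C → ℕ` is *cohomological* if (1) it is additive on direct
sums, (2) on each object some suspension of it vanishes, and (3) for every exact
triangle and every labelling `X₀, X₁, X₂, …` of the induced long sequence with
`χ X₀ = 0`, the alternating sums `∑_{i=0}^n (-1)^{i+n} χ(X_i)` are nonnegative,
with equality whenever `χ X_n = 0`. -/
def IsCohFn [HasBinaryBiproducts C] (χ : C → ℕ) : Prop :=
  (∀ X Y : C, χ (X ⊞ Y) = χ X + χ Y) ∧
  (∀ X : C, ∃ n : ℤ, χ (X⟦n⟧) = 0) ∧
  (∀ T : Triangle C, T ∈ (distTriang C) → ∀ d : ℤ, χ (triSeq T d) = 0 →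
    ∀ n : ℕ, (0 ≤ ∑ i ∈ Finset.range (n + 1), (-1 : ℤ) ^ (i + n) * χ (triSeq T (d + i))) ∧
      (χ (triSeq T (d + n)) = 0 →
        ∑ i ∈ Finset.range (n + 1), (-1 : ℤ) ^ (i + n) * χ (triSeq T (d + i)) = 0))

/-- A cohomological function is *irreducible* if it is nonzero and cannot be
written as the sum of two nonzero cohomological functions. -/
def IsIrreducibleCohFn [HasBinaryBiproducts C] (χ : C → ℕ) : Prop :=
  (∃ X : C, χ X ≠ 0) ∧
    ∀ φ ψ : C → ℕ, IsCohFn φ → IsCohFn ψ → (∀ X : C, χ X = φ X + ψ X) →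
      (∀ X : C, φ X = 0) ∨ (∀ X : C, ψ X = 0)

/-- A functor `H : Cᵒᵖ ⥤ Ab` is cohomological if it is additive and sends exact
triangles to exact sequences of abelian groups. -/
def IsCohFunctor (H : Cᵒᵖ ⥤ AddCommGrpCat.{v}) : Prop :=
  H.Additive ∧ ∀ T : Triangle C, T ∈ (distTriang C) →
    Function.Exact (H.map T.mor₂.op) (H.map T.mor₁.op)

/-- The action of the endomorphism ring `End H` of a functor `H : Cᵒᵖ ⥤ Ab` on
each of its values. -/
instance endSMul (H : Cᵒᵖ ⥤ AddCommGrpCat.{v}) (X : Cᵒᵖ) : SMul (End H) (H.obj X) :=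
  ⟨fun α x => α.app X x⟩

/-- Each value `H X` is a module over the endomorphism ring `End H`. -/
instance endModule (H : Cᵒᵖ ⥤ AddCommGrpCat.{v}) (X : Cᵒᵖ) : Module (End H) (H.obj X) where
  one_smul _ := rfl
  mul_smul _ _ _ := rfl
  smul_zero _ := map_zero _
  smul_add _ _ _ := map_add _ _ _
  add_smul _ _ _ := AddMonoidHom.add_apply _ _ _
  zero_smul _ := AddMonoidHom.zero_apply _

/-- The length of a module, defined as the Krull dimension of its lattice of
submodules (a natural number; `0` by convention if this is infinite). -/
noncomputable def moduleLength (R : Type*) [Ring R] (M : Type*) [AddCommGroup M]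
    [Module R M] : ℕ :=
  (WithBot.unbotD 0 (Order.krullDim (Submodule R M))).toNat

/-- A cohomological functor `H : Cᵒᵖ ⥤ Ab` is *endofinite* if each value `H X`
has finite length over `End H` and each object has a suspension killed by `H`. -/
def IsEndofiniteCohFunctor (H : Cᵒᵖ ⥤ AddCommGrpCat.{v}) : Prop :=
  IsCohFunctor H ∧ (∀ X : C, IsFiniteLength (End H) (H.obj (op X))) ∧
    ∀ X : C, ∃ n : ℤ, IsZero (H.obj (op (X⟦n⟧)))

/-- A functor is indecomposable if it is nonzero and is not a direct sum of two
nonzero cohomological functors. -/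
def IsIndecCohFunctor (H : Cᵒᵖ ⥤ AddCommGrpCat.{v}) : Prop :=
  ¬ IsZero H ∧ ¬ ∃ G G' : Cᵒᵖ ⥤ AddCommGrpCat.{v}, IsCohFunctor G ∧ IsCohFunctor G' ∧
    ¬ IsZero G ∧ ¬ IsZero G' ∧ Nonempty (H ≅ G ⊞ G')

/-- The cohomological function induced by an endofinite cohomological functor:
`χ_H X` is the length of `H X` over `End H`. -/
noncomputable def chiH (H : Cᵒᵖ ⥤ AddCommGrpCat.{v}) (X : C) : ℕ :=
  moduleLength (End H) (H.obj (op X))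

/-- A *thick subcategory* of a triangulated category: a class of objects
containing the zero objects, closed under isomorphisms, shifts, extensions
(triangles) and direct summands. -/
structure IsThickClass (C : Type u) [Category.{v} C] [HasZeroObject C] [HasShift C ℤ]
    [Preadditive C] [∀ n : ℤ, (CategoryTheory.shiftFunctor C n).Additive] [Pretriangulated C]
    [HasBinaryBiproducts C] (P : C → Prop) : Prop where
  zero : ∀ X : C, IsZero X → P X
  iso : ∀ {X Y : C}, (X ≅ Y) → P X → P Y
  shift : ∀ (X : C) (n : ℤ), P X → P (X⟦n⟧)
  ext : ∀ T : Triangle C, T ∈ (distTriang C) → P T.obj₁ → P T.obj₂ → P T.obj₃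
  summand : ∀ X Y : C, P (X ⊞ Y) → P X


/-!
Write `M^k` as `Hom_A(A^k, M)`: precomposition with `A^m ≅ A^n` then gives `M^m ≅ M^n`, linear
over any ring `R` whose action on `M` commutes with that of `A`. When `M` has finite `R`-length,
additivity of length forces `m · ℓ(M) = n · ℓ(M)`, so `M = 0`; with `R = End_A M` this is the
first claim. For the second, `End G ≅ A` acts on each `H(G⟦k⟧)` from the right, commuting with
`End H`; the opposite ring `Aᵐᵒᵖ` also lacks IBN (the same transfer applied to the right
`A`-module `A`), so `H` kills every shift of `G`. The objects all of whose shifts `H` kills form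
a thick subcategory, hence contain everything.
-/

def LinearEquiv.piEquivOfRingPiEquiv {A M ι κ : Type*} [Semiring A] [AddCommMonoid M]
    [Module A M] [Fintype ι] [Fintype κ] [DecidableEq ι] [DecidableEq κ] (S : Type*)
    [Semiring S] [Module S M] [SMulCommClass A S M] (e : (ι → A) ≃ₗ[A] (κ → A)) :
    (ι → M) ≃ₗ[S] (κ → M) :=
  (LinearEquiv.piCongrRight fun _ => (LinearMap.ringLmapEquivSelf A S M).symm) ≪≫ₗ
    LinearMap.lsum A (fun _ => A) S ≪≫ₗ e.congrLeft M S ≪≫ₗ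
    (LinearMap.lsum A (fun _ => A) S).symm ≪≫ₗ
    LinearEquiv.piCongrRight fun _ => LinearMap.ringLmapEquivSelf A S M

def LinearEquiv.mulOppositePiEquiv {A ι κ : Type*} [Semiring A] [Fintype ι] [Fintype κ]
    [DecidableEq ι] [DecidableEq κ] (e : (ι → A) ≃ₗ[A] (κ → A)) :
    (ι → Aᵐᵒᵖ) ≃ₗ[Aᵐᵒᵖ] (κ → Aᵐᵒᵖ) :=
  (LinearEquiv.piCongrRight fun _ => (MulOpposite.opLinearEquiv Aᵐᵒᵖ).symm) ≪≫ₗ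
    e.piEquivOfRingPiEquiv Aᵐᵒᵖ ≪≫ₗ
    LinearEquiv.piCongrRight fun _ => MulOpposite.opLinearEquiv Aᵐᵒᵖ

section FiniteLength

variable {A R M : Type*} [Ring A] [Ring R] [AddCommGroup M] [Module R M]

theorem subsingleton_of_pi_linearEquiv (hM : IsFiniteLength R M) {m n : ℕ} (hmn : m ≠ n)
    (e : (Fin m → M) ≃ₗ[R] (Fin n → M)) : Subsingleton M := by
  have hlen := e.length_eq
  simp only [Module.length_pi, ENat.card_eq_coe_fintype_card, Fintype.card_fin] at hlen
  rw [← Module.length_eq_zero_iff (R := R)]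
  lift (Module.length R M) to ℕ using Module.length_ne_top_iff.mpr hM with l
  norm_cast at hlen ⊢
  exact (mul_eq_mul_right_iff.mp hlen).resolve_left hmn

theorem subsingleton_of_ring_pi_linearEquiv [Module A M] [SMulCommClass A R M]
    (hM : IsFiniteLength R M) {m n : ℕ} (hmn : m ≠ n) (e : (Fin m → A) ≃ₗ[A] (Fin n → A)) :
    Subsingleton M :=
  subsingleton_of_pi_linearEquiv hM hmn (e.piEquivOfRingPiEquiv R)

theorem subsingleton_of_ringHom_moduleEnd (hM : IsFiniteLength R M)
    (ρ : A →+* Module.End R M) {m n : ℕ} (hmn : m ≠ n) (e : (Fin m → A) ≃ₗ[A] (Fin n → A)) :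
    Subsingleton M :=
  letI : Module A M := Module.compHom M ρ
  haveI : SMulCommClass A R M := ⟨fun a r x => (ρ a).map_smul r x⟩
  subsingleton_of_ring_pi_linearEquiv hM hmn e

end FiniteLength

theorem Function.Exact.subsingleton {M N P : Type*} [AddZeroClass M] [AddZeroClass N] [Zero P]
    {f : M →+ N} {g : N → P} (h : Function.Exact f g) [Subsingleton M] [Subsingleton P] :
    Subsingleton N := by
  refine subsingleton_of_forall_eq 0 fun y => ?_
  obtain ⟨x, rfl⟩ := (h y).mp (Subsingleton.elim _ _)
  rw [Subsingleton.elim x 0, map_zero]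

def CategoryTheory.Functor.mapEndRingHom {D E : Type*} [Category D] [Category E] [Preadditive D]
    [Preadditive E] (F : D ⥤ E) [F.Additive] (X : D) : End X →+* End (F.obj X) :=
  { F.mapEnd X with
    map_zero' := F.map_zero X X
    map_add' := fun _ _ => F.map_add }

section Preadditive

variable {D : Type*} [Category.{v} D] [Preadditive D]

def endOpToModuleEnd (H : Dᵒᵖ ⥤ AddCommGrpCat.{v}) [H.Additive] (Y : D) :
    (End Y)ᵐᵒᵖ →+* Module.End (End H) (H.obj (op Y)) where
  toFun f :=
    { (H.map f.unop.op).hom with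
      map_smul' := fun α x => (NatTrans.naturality_apply α f.unop.op x).symm }
  map_one' := by ext x; simp
  map_mul' f g := by ext x; simp
  map_zero' := by ext x; simp
  map_add' f g := by
    ext x
    show H.map (f.unop + g.unop).op x = H.map f.unop.op x + H.map g.unop.op x
    rw [op_add, H.map_add]
    rfl

theorem isZero_obj_of_ringHom_end (H : Dᵒᵖ ⥤ AddCommGrpCat.{v}) [H.Additive] {Y : D}
    (hY : IsFiniteLength (End H) (H.obj (op Y))) {A : Type*} [Ring A] (φ : A →+* End Y)
    {m n : ℕ} (hmn : m ≠ n) (e : (Fin m → A) ≃ₗ[A] (Fin n → A)) : IsZero (H.obj (op Y)) :=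
  AddCommGrpCat.isZero_iff_subsingleton.mpr <|
    subsingleton_of_ringHom_moduleEnd hY ((endOpToModuleEnd H Y).comp φ.op) hmn
      e.mulOppositePiEquiv

end Preadditive

theorem isZero_obj_shift_shift {D E : Type*} [Category D] [Category E] [HasShift D ℤ]
    [HasZeroMorphisms E] (H : Dᵒᵖ ⥤ E) (X : D) (a b : ℤ)
    (h : IsZero (H.obj (op (X⟦a + b⟧)))) : IsZero (H.obj (op (X⟦a⟧⟦b⟧))) :=
  h.of_iso (H.mapIso ((shiftFunctorAdd D a b).app X).op)

theorem IsCohFunctor.isZero_obj₂ {H : Cᵒᵖ ⥤ AddCommGrpCat.{v}} (hH : IsCohFunctor H)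
    {T : Triangle C} (hT : T ∈ distTriang C) (h₁ : IsZero (H.obj (op T.obj₁)))
    (h₃ : IsZero (H.obj (op T.obj₃))) : IsZero (H.obj (op T.obj₂)) := by
  rw [AddCommGrpCat.isZero_iff_subsingleton] at h₁ h₃ ⊢
  exact (hH.2 T hT).subsingleton (f := (H.map T.mor₂.op).hom)

theorem IsCohFunctor.isThickClass [HasBinaryBiproducts C] {H : Cᵒᵖ ⥤ AddCommGrpCat.{v}}
    (hH : IsCohFunctor H) : IsThickClass C fun X => ∀ k : ℤ, IsZero (H.obj (op (X⟦k⟧))) := by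
  have := hH.1
  refine ⟨fun X hX k => ?_, fun i hX k => ?_, fun X n hX k => ?_, fun T hT h₁ h₂ k => ?_,
    fun X Y hXY k => ?_⟩
  · exact H.map_isZero ((shiftFunctor C k).map_isZero hX).op
  · exact (hX k).of_iso (H.mapIso ((shiftFunctor C k).mapIso i).op)
  · exact isZero_obj_shift_shift H X n k (hX (n + k))
  · exact hH.isZero_obj₂ (rot_of_distTriang _ (Triangle.shift_distinguished T hT k)) (h₂ k)
      (isZero_obj_shift_shift H T.obj₁ k 1 (h₁ (k + 1)))
  · have hX : Retract X (X ⊞ Y) := ⟨biprod.inl, biprod.fst, biprod.inl_fst⟩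
    exact IsZero.of_mono ((hX.map (shiftFunctor C k)).op.map H).i (hXY k)

/-- STATEMENT 18: Let `A` be a ring without invariant basis number, say
`A^m ≅ A^n` as `A`-modules with `m ≠ n`.  Then every `A`-module of finite
endolength is zero; consequently every endofinite cohomological functor
`H : D^b(proj A)ᵒᵖ ⥤ Ab` is zero.  (The category of perfect complexes is
presented abstractly: a triangulated category `C` generated, as a thick
subcategory, by an object `G` with endomorphism ring `A`; for `C = D^b(proj A)`
take `G = A`.) -/
theorem no_endofinite_over_ring_without_IBN
    {A : Type v} [Ring A] (m n : ℕ) (hmn : m ≠ n)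
    (e : (Fin m → A) ≃ₗ[A] (Fin n → A)) :
    (∀ (M : Type w) [AddCommGroup M] [Module A M],
        IsFiniteLength (Module.End A M) M → Subsingleton M) ∧
    (∀ (C : Type u) [Category.{v} C] [HasZeroObject C] [HasShift C ℤ]
        [Preadditive C] [∀ k : ℤ, (CategoryTheory.shiftFunctor C k).Additive]
        [Pretriangulated C] [HasBinaryBiproducts C],
        ∀ (G : C) (_ : A ≃+* End G)
        (_ : ∀ P : C → Prop, IsThickClass C P → P G → ∀ X : C, P X)
        (H : Cᵒᵖ ⥤ AddCommGrpCat.{v}), IsEndofiniteCohFunctor H →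
          ∀ X : C, IsZero (H.obj (op X))) := by
  refine ⟨fun M _ _ hM => subsingleton_of_ring_pi_linearEquiv hM hmn e, ?_⟩
  rintro C _ _ _ _ _ _ _ G eG hgen H ⟨hH, hLen, -⟩ X
  have := hH.1
  have hG (k : ℤ) : IsZero (H.obj (op (G⟦k⟧))) :=
    isZero_obj_of_ringHom_end H (hLen _)
      (((shiftFunctor C k).mapEndRingHom G).comp eG.toRingHom) hmn e
  exact (hgen _ hH.isThickClass hG X 0).of_iso (H.mapIso ((shiftFunctorZero C ℤ).app X).op)
end
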